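/- arXiv:1801.09933 — 5 statements merged into one kernel-verified Lean document; each statement's English description precedes it below -/
import Mathlib

section
/- Let a ∈ ℂ, a ≠ 0, and let φ, ψ : ℝ × ℝ → ℂ be twice continuously differentiable functions such that for all (t,x) ∈ ℝ²: ∂ₓψ(t,x) − ∂ₜφ(t,x) = (1/a)·sin((ψ(t,x)+φ(t,x))/2) + a·sin((ψ(t,x)−φ(t,x))/2) and ∂ₜψ(t,x) − ∂ₓφ(t,x) = (1/a)·sin((ψ(t,x)+φ(t,x))/2) − a·sin((ψ(t,x)−φ(t,x))/2). Then both functions solve the complex sine-Gordon equation: ∂ₜₜψ − ∂ₓₓψ + sin ψ = 0 and ∂ₜₜφ − ∂ₓₓφ + sin φ = 0 everywhere on ℝ². -/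
/-!
Along the light-cone directions `e₊ = (1, 1)`, `e₋ = (1, -1)` and for `u = (ψ + φ) / 2`,
`v = (ψ - φ) / 2`, the Bäcklund equations become `∂₊v = a⁻¹ sin u` and `∂₋u = -a sin v`.
Differentiating once more gives `∂₊∂₋u = -sin u cos v` and `∂₋∂₊v = -cos u sin v`, so by the
symmetry of second derivatives `∂₊∂₋(u ± v) = -sin (u ± v)`; finally `∂₊∂₋ = ∂ₜₜ - ∂ₓₓ`.
-/

open Complex Function

section SecondDerivative

variable {E F : Type*} [NormedAddCommGroup E] [NormedSpace ℝ E]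
  [NormedAddCommGroup F] [NormedSpace ℝ F] {f g : E → F}

theorem ContDiff.differentiable_fderiv_apply (hf : ContDiff ℝ 2 f) (v : E) :
    Differentiable ℝ (fun q => fderiv ℝ f q v) :=
  ((hf.fderiv_right (m := 1) (by norm_num)).differentiable one_ne_zero).clm_apply
    (differentiable_const v)

theorem ContDiff.fderiv_fderiv_apply (hf : ContDiff ℝ 2 f) (p v w : E) :
    fderiv ℝ (fun q => fderiv ℝ f q v) p w = fderiv ℝ (fderiv ℝ f) p w v := by
  have hf' := (hf.fderiv_right (m := 1) (by norm_num)).differentiable one_ne_zero p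
  rw [fderiv_clm_apply hf' (differentiableAt_const v)]
  simp

theorem ContDiff.fderiv_fderiv_comm (hf : ContDiff ℝ 2 f) (p v w : E) :
    fderiv ℝ (fderiv ℝ f) p v w = fderiv ℝ (fderiv ℝ f) p w v :=
  hf.contDiffAt.isSymmSndFDerivAt (by simp) v w

theorem fderiv_fderiv_add_apply (hf : ContDiff ℝ 2 f) (hg : ContDiff ℝ 2 g) (p v w : E) :
    fderiv ℝ (fderiv ℝ (f + g)) p v w
      = fderiv ℝ (fderiv ℝ f) p v w + fderiv ℝ (fderiv ℝ g) p v w := by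
  have h := congrArg (· ![v, w])
    (iteratedFDeriv_add_apply (i := 2) (hf.contDiffAt (x := p)) hg.contDiffAt)
  simpa [iteratedFDeriv_two_apply] using h

theorem fderiv_fderiv_sub_apply (hf : ContDiff ℝ 2 f) (hg : ContDiff ℝ 2 g) (p v w : E) :
    fderiv ℝ (fderiv ℝ (f - g)) p v w
      = fderiv ℝ (fderiv ℝ f) p v w - fderiv ℝ (fderiv ℝ g) p v w := by
  have h := congrArg (· ![v, w])
    (iteratedFDeriv_sub_apply (i := 2) (hf.contDiffAt (x := p)) hg.contDiffAt)
  simpa [iteratedFDeriv_two_apply] using h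

theorem ContDiff.fderiv_fderiv_apply_eq_of_fderiv_apply_eq_sin {f g : E → ℂ}
    (hf : ContDiff ℝ 2 f) (hg : Differentiable ℝ g) {v : E} {c : ℂ}
    (h : ∀ q, fderiv ℝ f q v = c * Complex.sin (g q)) (p w : E) :
    fderiv ℝ (fderiv ℝ f) p w v = c * Complex.cos (g p) * fderiv ℝ g p w := by
  have hsin : HasFDerivAt (fun q => c * Complex.sin (g q))
      (c • Complex.cos (g p) • fderiv ℝ g p) p :=
    ((hasDerivAt_sin (g p)).comp_hasFDerivAt p (hg p).hasFDerivAt).const_mul c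
  rw [← hf.fderiv_fderiv_apply, funext h, hsin.fderiv]
  simp [mul_assoc]

theorem sineGordon_of_lightCone {U V : E → ℂ} {a : ℂ} (ha : a ≠ 0) (hU : ContDiff ℝ 2 U)
    (hV : ContDiff ℝ 2 V) {v w : E} (hVv : ∀ q, fderiv ℝ V q v = a⁻¹ * sin (U q))
    (hUw : ∀ q, fderiv ℝ U q w = -a * sin (V q)) (p : E) :
    fderiv ℝ (fderiv ℝ (U + V)) p v w + sin ((U + V) p) = 0 ∧
      fderiv ℝ (fderiv ℝ (U - V)) p v w + sin ((U - V) p) = 0 := by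
  have hUvw := hU.fderiv_fderiv_apply_eq_of_fderiv_apply_eq_sin
    (hV.differentiable two_ne_zero) hUw p v
  have hVwv := hV.fderiv_fderiv_apply_eq_of_fderiv_apply_eq_sin
    (hU.differentiable two_ne_zero) hVv p w
  rw [fderiv_fderiv_add_apply hU hV, fderiv_fderiv_sub_apply hU hV, hV.fderiv_fderiv_comm p v w,
    hUvw, hVwv, hVv, hUw, Pi.add_apply, Pi.sub_apply, sin_add, sin_sub]
  constructor <;> field_simp <;> ring

end SecondDerivative

section Plane

variable {F : Type*} [NormedAddCommGroup F] [NormedSpace ℝ F]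

theorem deriv_slice_fst {f : ℝ → ℝ → F} {t x : ℝ}
    (hf : DifferentiableAt ℝ (uncurry f) (t, x)) :
    deriv (fun s => f s x) t = fderiv ℝ (uncurry f) (t, x) (1, 0) := by
  have h := hf.hasFDerivAt.comp_hasDerivAt t ((hasDerivAt_id' t).prodMk (hasDerivAt_const t x))
  exact h.deriv

theorem deriv_slice_snd {f : ℝ → ℝ → F} {t x : ℝ}
    (hf : DifferentiableAt ℝ (uncurry f) (t, x)) :
    deriv (fun y => f t y) x = fderiv ℝ (uncurry f) (t, x) (0, 1) := by
  have h := hf.hasFDerivAt.comp_hasDerivAt x ((hasDerivAt_const x t).prodMk (hasDerivAt_id' x))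
  exact h.deriv

theorem deriv_deriv_slice_fst {f : ℝ → ℝ → F} (hf : ContDiff ℝ 2 (uncurry f)) (t x : ℝ) :
    deriv (fun s => deriv (fun s' => f s' x) s) t
      = fderiv ℝ (fderiv ℝ (uncurry f)) (t, x) (1, 0) (1, 0) := by
  have hd := hf.differentiable two_ne_zero
  simp_rw [deriv_slice_fst (hd _)]
  rw [deriv_slice_fst (f := fun s y => fderiv ℝ (uncurry f) (s, y) (1, 0))
    (hf.differentiable_fderiv_apply (1, 0) _)]
  exact hf.fderiv_fderiv_apply _ _ _

theorem deriv_deriv_slice_snd {f : ℝ → ℝ → F} (hf : ContDiff ℝ 2 (uncurry f)) (t x : ℝ) :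
    deriv (fun y => deriv (fun y' => f t y') y) x
      = fderiv ℝ (fderiv ℝ (uncurry f)) (t, x) (0, 1) (0, 1) := by
  have hd := hf.differentiable two_ne_zero
  simp_rw [deriv_slice_snd (hd _)]
  rw [deriv_slice_snd (f := fun s y => fderiv ℝ (uncurry f) (s, y) (0, 1))
    (hf.differentiable_fderiv_apply (0, 1) _)]
  exact hf.fderiv_fderiv_apply _ _ _

theorem ContDiff.fderiv_fderiv_lightCone {f : ℝ × ℝ → F} (hf : ContDiff ℝ 2 f) (p : ℝ × ℝ) :
    fderiv ℝ (fderiv ℝ f) p (1, 1) (1, -1)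
      = fderiv ℝ (fderiv ℝ f) p (1, 0) (1, 0) - fderiv ℝ (fderiv ℝ f) p (0, 1) (0, 1) := by
  have hplus : ((1, 1) : ℝ × ℝ) = (1, 0) + (0, 1) := by simp
  have hminus : ((1, -1) : ℝ × ℝ) = (1, 0) - (0, 1) := by simp
  rw [hplus, hminus, map_add, map_sub, add_apply, add_apply,
    hf.fderiv_fderiv_comm p (0, 1) (1, 0)]
  abel

theorem backlund_lightCone {Ψ Φ : ℝ × ℝ → ℂ} (hΨ : Differentiable ℝ Ψ) (hΦ : Differentiable ℝ Φ)
    {a : ℂ}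
    (h₁ : ∀ p, fderiv ℝ Ψ p (0, 1) - fderiv ℝ Φ p (1, 0)
      = a⁻¹ * sin ((Ψ p + Φ p) / 2) + a * sin ((Ψ p - Φ p) / 2))
    (h₂ : ∀ p, fderiv ℝ Ψ p (1, 0) - fderiv ℝ Φ p (0, 1)
      = a⁻¹ * sin ((Ψ p + Φ p) / 2) - a * sin ((Ψ p - Φ p) / 2)) :
    (∀ p, fderiv ℝ (fun q => (Ψ q - Φ q) / 2) p (1, 1) = a⁻¹ * sin ((Ψ p + Φ p) / 2)) ∧
      ∀ p, fderiv ℝ (fun q => (Ψ q + Φ q) / 2) p (1, -1) = -a * sin ((Ψ p - Φ p) / 2) := by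
  have hplus : ((1, 1) : ℝ × ℝ) = (1, 0) + (0, 1) := by simp
  have hminus : ((1, -1) : ℝ × ℝ) = (1, 0) - (0, 1) := by simp
  constructor <;> intro p
  · have hV : HasFDerivAt (fun q => (Ψ q - Φ q) / 2)
        ((2 : ℂ)⁻¹ • (fderiv ℝ Ψ p - fderiv ℝ Φ p)) p := by
      simpa only [div_eq_mul_inv, Pi.sub_apply] using
        ((hΨ p).hasFDerivAt.sub (hΦ p).hasFDerivAt).mul_const (2⁻¹ : ℂ)
    rw [hV.fderiv, hplus]
    simp only [smul_apply, sub_apply, map_add, smul_eq_mul]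
    linear_combination (h₁ p + h₂ p) / 2
  · have hU : HasFDerivAt (fun q => (Ψ q + Φ q) / 2)
        ((2 : ℂ)⁻¹ • (fderiv ℝ Ψ p + fderiv ℝ Φ p)) p := by
      simpa only [div_eq_mul_inv, Pi.add_apply] using
        ((hΨ p).hasFDerivAt.add (hΦ p).hasFDerivAt).mul_const (2⁻¹ : ℂ)
    rw [hU.fderiv, hminus]
    simp only [smul_apply, add_apply, map_sub, smul_eq_mul]
    linear_combination (h₂ p - h₁ p) / 2

end Plane

/-- **Bäcklund transformations produce sine-Gordon solutions.**
If `φ`, `ψ : ℝ × ℝ → ℂ` are twice continuously differentiable and related by the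
Bäcklund transformation equations with parameter `a ≠ 0`, then both solve the
complex sine-Gordon equation `∂ₜₜu − ∂ₓₓu + sin u = 0`. -/
theorem backlund_implies_sineGordon (a : ℂ) (ha : a ≠ 0) (φ ψ : ℝ → ℝ → ℂ)
    (hφ : ContDiff ℝ 2 (fun p : ℝ × ℝ => φ p.1 p.2))
    (hψ : ContDiff ℝ 2 (fun p : ℝ × ℝ => ψ p.1 p.2))
    (hBT1 : ∀ t x : ℝ,
      deriv (fun y => ψ t y) x - deriv (fun s => φ s x) t
        = (1 / a) * Complex.sin ((ψ t x + φ t x) / 2)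
          + a * Complex.sin ((ψ t x - φ t x) / 2))
    (hBT2 : ∀ t x : ℝ,
      deriv (fun s => ψ s x) t - deriv (fun y => φ t y) x
        = (1 / a) * Complex.sin ((ψ t x + φ t x) / 2)
          - a * Complex.sin ((ψ t x - φ t x) / 2)) :
    (∀ t x : ℝ,
      deriv (fun s => deriv (fun s' => ψ s' x) s) t
        - deriv (fun y => deriv (fun y' => ψ t y') y) x
        + Complex.sin (ψ t x) = 0) ∧
    (∀ t x : ℝ,
      deriv (fun s => deriv (fun s' => φ s' x) s) t
        - deriv (fun y => deriv (fun y' => φ t y') y) x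
        + Complex.sin (φ t x) = 0) := by
  have hΨ : ContDiff ℝ 2 (uncurry ψ) := hψ
  have hΦ : ContDiff ℝ 2 (uncurry φ) := hφ
  have hΨd := hΨ.differentiable two_ne_zero
  have hΦd := hΦ.differentiable two_ne_zero
  obtain ⟨hVplus, hUminus⟩ := backlund_lightCone hΨd hΦd (a := a)
    (fun ⟨t, x⟩ => by
      rw [← deriv_slice_snd (hΨd _), ← deriv_slice_fst (hΦd _), ← one_div]; exact hBT1 t x)
    (fun ⟨t, x⟩ => by
      rw [← deriv_slice_fst (hΨd _), ← deriv_slice_snd (hΦd _), ← one_div]; exact hBT2 t x)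
  set U : ℝ × ℝ → ℂ := fun q => (uncurry ψ q + uncurry φ q) / 2
  set V : ℝ × ℝ → ℂ := fun q => (uncurry ψ q - uncurry φ q) / 2
  have hψUV : uncurry ψ = U + V := by ext; simp only [U, V, Pi.add_apply]; ring
  have hφUV : uncurry φ = U - V := by ext; simp only [U, V, Pi.sub_apply]; ring
  have hSG := sineGordon_of_lightCone (U := U) (V := V) ha ((hΨ.add hΦ).div_const 2)
    ((hΨ.sub hΦ).div_const 2) hVplus hUminus
  refine ⟨fun t x => ?_, fun t x => ?_⟩
  · rw [deriv_deriv_slice_fst hΨ, deriv_deriv_slice_snd hΨ, ← hΨ.fderiv_fderiv_lightCone]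
    have h := (hSG (t, x)).1
    rwa [← hψUV] at h
  · rw [deriv_deriv_slice_fst hΦ, deriv_deriv_slice_snd hΦ, ← hΦ.fderiv_fderiv_lightCone]
    have h := (hSG (t, x)).2
    rwa [← hφUV] at h
end

section
/- Let a ∈ ℂ, a ≠ 0. Let φ, ψ : ℝ → ℂ be bounded differentiable functions and φₜ, ψₜ : ℝ → ℂ measurable functions such that φ′, ψ′, φₜ, ψₜ, sin(φ/2), sin(ψ/2) all lie in L²(ℝ;ℂ), and such that for all x ∈ ℝ: ψ′(x) − φₜ(x) = (1/a)·sin((ψ(x)+φ(x))/2) + a·sin((ψ(x)−φ(x))/2) and ψₜ(x) − φ′(x) = (1/a)·sin((ψ(x)+φ(x))/2) − a·sin((ψ(x)−φ(x))/2). Assume further that the four limits ℓ₊⁺ = lim_{x→+∞}(1 − cos((ψ(x)+φ(x))/2)), ℓ₋⁺ = lim_{x→−∞}(1 − cos((ψ(x)+φ(x))/2)), ℓ₊⁻ = lim_{x→+∞}(1 − cos((ψ(x)−φ(x))/2)), ℓ₋⁻ = lim_{x→−∞}(1 − cos((ψ(x)−φ(x))/2)) exist in ℂ. Then (1/2)∫_ℝ(ψ′²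 + ψₜ²) dx + ∫_ℝ(1−cos ψ) dx = (1/2)∫_ℝ(φ′² + φₜ²) dx + ∫_ℝ(1−cos φ) dx + (2/a)(ℓ₊⁺ − ℓ₋⁺) + 2a(ℓ₊⁻ − ℓ₋⁻), and (1/2)∫_ℝ ψ′ψₜ dx = (1/2)∫_ℝ φ′φₜ dx + (1/a)(ℓ₊⁺ − ℓ₋⁺) − a(ℓ₊⁻ − ℓ₋⁻). -/
open MeasureTheory Filter Complex

/-!
Write `S± = sin ((ψ ± φ) / 2)`. The Bäcklund equations express `ψ′` and `ψₜ` through `φₜ`, `φ′`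
and `S±`; substituting them, together with `cos ψ - cos φ = -2 S₊ S₋`, turns the energy and
momentum densities of `ψ` into those of `φ` plus multiples of
`S± (ψ′ ± φ′) / 2 = d/dx (1 - cos ((ψ ± φ) / 2))`. Solving the Bäcklund equations for `S±` puts
them in `L²`, so these derivatives are integrable and, by the fundamental theorem of calculus on
`ℝ`, integrate to the differences of the limits at `±∞`.
-/

section Densities

variable {a φ ψ φ' ψ' φt ψt : ℂ}

theorem backlund_energy_density_eq (ha : a ≠ 0)
    (h₁ : ψ' - φt = 1 / a * sin ((ψ + φ) / 2) + a * sin ((ψ - φ) / 2))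
    (h₂ : ψt - φ' = 1 / a * sin ((ψ + φ) / 2) - a * sin ((ψ - φ) / 2)) :
    1 / 2 * (ψ' ^ 2 + ψt ^ 2) + (1 - cos ψ)
      = 1 / 2 * (φ' ^ 2 + φt ^ 2) + (1 - cos φ)
        + 2 / a * (sin ((ψ + φ) / 2) * (ψ' + φ') / 2)
        + 2 * a * (sin ((ψ - φ) / 2) * (ψ' - φ') / 2) := by
  rw [sub_eq_iff_eq_add.mp h₁, sub_eq_iff_eq_add.mp h₂]
  linear_combination
    -(cos_sub_cos ψ φ) - 2 * sin ((ψ + φ) / 2) * sin ((ψ - φ) / 2) * mul_one_div_cancel ha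

theorem backlund_momentum_density_eq
    (h₁ : ψ' - φt = 1 / a * sin ((ψ + φ) / 2) + a * sin ((ψ - φ) / 2))
    (h₂ : ψt - φ' = 1 / a * sin ((ψ + φ) / 2) - a * sin ((ψ - φ) / 2)) :
    1 / 2 * (ψ' * ψt)
      = 1 / 2 * (φ' * φt)
        + 1 / a * (sin ((ψ + φ) / 2) * (ψ' + φ') / 2)
        - a * (sin ((ψ - φ) / 2) * (ψ' - φ') / 2) := by
  rw [sub_eq_iff_eq_add.mp h₁, sub_eq_iff_eq_add.mp h₂]
  ring

end Densities

theorem hasDerivAt_one_sub_cos_half {u : ℝ → ℂ} {u' : ℂ} {x : ℝ} (hu : HasDerivAt u u' x) :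
    HasDerivAt (fun y => 1 - cos (u y / 2)) (sin (u x / 2) * u' / 2) x := by
  simpa [Function.comp_def, mul_div_assoc] using
    ((Complex.hasDerivAt_cos (u x / 2)).comp x (hu.div_const 2)).const_sub 1

section Integrals

variable {α : Type*} [MeasurableSpace α] {μ : Measure α}

theorem integrable_sq_of_memLp_two {f : α → ℂ} (hf : MemLp f 2 μ) :
    Integrable (fun x => f x ^ 2) μ :=
  (hf.integrable_mul hf).congr (.of_forall fun x => (sq (f x)).symm)

theorem integrable_one_sub_cos {u : α → ℂ} (hu : MemLp (fun x => sin (u x / 2)) 2 μ) :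
    Integrable (fun x => 1 - cos (u x)) μ := by
  have h : ∀ z : ℂ, 1 - cos z = 2 * sin (z / 2) ^ 2 := fun z => by
    have h₂ := cos_two_mul_eq_one_sub (z / 2)
    rw [mul_div_cancel₀ z two_ne_zero] at h₂
    linear_combination -h₂
  simpa only [h] using (integrable_sq_of_memLp_two hu).const_mul 2

theorem integrable_sq_add_sq {u' ut : α → ℂ} (hu' : MemLp u' 2 μ) (hut : MemLp ut 2 μ) :
    Integrable (fun x => u' x ^ 2 + ut x ^ 2) μ :=
  (integrable_sq_of_memLp_two hu').fun_add (integrable_sq_of_memLp_two hut)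

theorem integrable_energy_density {u' ut u : α → ℂ} (hu' : MemLp u' 2 μ) (hut : MemLp ut 2 μ)
    (hu : MemLp (fun x => sin (u x / 2)) 2 μ) :
    Integrable (fun x => 1 / 2 * (u' x ^ 2 + ut x ^ 2) + (1 - cos (u x))) μ :=
  ((integrable_sq_add_sq hu' hut).const_mul _).fun_add (integrable_one_sub_cos hu)

theorem integral_energy_density {u' ut u : α → ℂ} (hu' : MemLp u' 2 μ) (hut : MemLp ut 2 μ)
    (hu : MemLp (fun x => sin (u x / 2)) 2 μ) :
    ∫ x, (1 / 2 * (u' x ^ 2 + ut x ^ 2) + (1 - cos (u x))) ∂μ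
      = 1 / 2 * ∫ x, (u' x ^ 2 + ut x ^ 2) ∂μ + ∫ x, (1 - cos (u x)) ∂μ := by
  rw [integral_add ((integrable_sq_add_sq hu' hut).const_mul _) (integrable_one_sub_cos hu),
    integral_const_mul]

theorem memLp_of_backlund_eqs {a : ℂ} (ha : a ≠ 0) {p : ENNReal} {s d f g : α → ℂ}
    (hf : MemLp f p μ) (hg : MemLp g p μ)
    (hfsd : ∀ x, f x = 1 / a * s x + a * d x) (hgsd : ∀ x, g x = 1 / a * s x - a * d x) :
    MemLp s p μ ∧ MemLp d p μ := by
  constructor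
  · convert (hf.add hg).const_mul (a / 2) using 1
    ext x
    simp only [Pi.add_apply, hfsd, hgsd]
    field_simp
    ring
  · convert (hf.sub hg).const_mul (1 / (2 * a)) using 1
    ext x
    simp only [Pi.sub_apply, hfsd, hgsd]
    field_simp
    ring

variable {a : ℂ} {φ ψ φ' ψ' φt ψt : α → ℂ}

theorem integrable_backlund_boundary_terms (ha : a ≠ 0) (hφ' : MemLp φ' 2 μ)
    (hψ' : MemLp ψ' 2 μ) (hφt : MemLp φt 2 μ) (hψt : MemLp ψt 2 μ)
    (h₁ : ∀ x, ψ' x - φt x = 1 / a * sin ((ψ x + φ x) / 2) + a * sin ((ψ x - φ x) / 2))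
    (h₂ : ∀ x, ψt x - φ' x = 1 / a * sin ((ψ x + φ x) / 2) - a * sin ((ψ x - φ x) / 2)) :
    Integrable (fun x => sin ((ψ x + φ x) / 2) * (ψ' x + φ' x) / 2) μ ∧
      Integrable (fun x => sin ((ψ x - φ x) / 2) * (ψ' x - φ' x) / 2) μ := by
  obtain ⟨hSp, hSm⟩ := memLp_of_backlund_eqs ha (hψ'.sub hφt) (hψt.sub hφ') h₁ h₂
  exact ⟨(hSp.integrable_mul (hψ'.add hφ')).div_const 2,
    (hSm.integrable_mul (hψ'.sub hφ')).div_const 2⟩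

theorem backlund_energy_integral_eq (ha : a ≠ 0) (hφ' : MemLp φ' 2 μ) (hψ' : MemLp ψ' 2 μ)
    (hφt : MemLp φt 2 μ) (hψt : MemLp ψt 2 μ) (hφs : MemLp (fun x => sin (φ x / 2)) 2 μ)
    (hψs : MemLp (fun x => sin (ψ x / 2)) 2 μ)
    (h₁ : ∀ x, ψ' x - φt x = 1 / a * sin ((ψ x + φ x) / 2) + a * sin ((ψ x - φ x) / 2))
    (h₂ : ∀ x, ψt x - φ' x = 1 / a * sin ((ψ x + φ x) / 2) - a * sin ((ψ x - φ x) / 2)) :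
    1 / 2 * ∫ x, (ψ' x ^ 2 + ψt x ^ 2) ∂μ + ∫ x, (1 - cos (ψ x)) ∂μ
      = 1 / 2 * ∫ x, (φ' x ^ 2 + φt x ^ 2) ∂μ + ∫ x, (1 - cos (φ x)) ∂μ
        + 2 / a * ∫ x, sin ((ψ x + φ x) / 2) * (ψ' x + φ' x) / 2 ∂μ
        + 2 * a * ∫ x, sin ((ψ x - φ x) / 2) * (ψ' x - φ' x) / 2 ∂μ := by
  obtain ⟨hBp, hBm⟩ := integrable_backlund_boundary_terms ha hφ' hψ' hφt hψt h₁ h₂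
  have hEφ := integrable_energy_density hφ' hφt hφs
  calc _ = ∫ x, (1 / 2 * (ψ' x ^ 2 + ψt x ^ 2) + (1 - cos (ψ x))) ∂μ :=
        (integral_energy_density hψ' hψt hψs).symm
    _ = ∫ x, (1 / 2 * (φ' x ^ 2 + φt x ^ 2) + (1 - cos (φ x))
          + 2 / a * (sin ((ψ x + φ x) / 2) * (ψ' x + φ' x) / 2)
          + 2 * a * (sin ((ψ x - φ x) / 2) * (ψ' x - φ' x) / 2)) ∂μ :=
        integral_congr_ae (.of_forall fun x => backlund_energy_density_eq ha (h₁ x) (h₂ x))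
    _ = _ := by
        rw [integral_add (hEφ.fun_add (hBp.const_mul _)) (hBm.const_mul _),
          integral_add hEφ (hBp.const_mul _), integral_const_mul, integral_const_mul,
          integral_energy_density hφ' hφt hφs]

theorem backlund_momentum_integral_eq (ha : a ≠ 0) (hφ' : MemLp φ' 2 μ) (hψ' : MemLp ψ' 2 μ)
    (hφt : MemLp φt 2 μ) (hψt : MemLp ψt 2 μ)
    (h₁ : ∀ x, ψ' x - φt x = 1 / a * sin ((ψ x + φ x) / 2) + a * sin ((ψ x - φ x) / 2))
    (h₂ : ∀ x, ψt x - φ' x = 1 / a * sin ((ψ x + φ x) / 2) - a * sin ((ψ x - φ x) / 2)) :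
    1 / 2 * ∫ x, ψ' x * ψt x ∂μ
      = 1 / 2 * ∫ x, φ' x * φt x ∂μ
        + 1 / a * ∫ x, sin ((ψ x + φ x) / 2) * (ψ' x + φ' x) / 2 ∂μ
        - a * ∫ x, sin ((ψ x - φ x) / 2) * (ψ' x - φ' x) / 2 ∂μ := by
  obtain ⟨hBp, hBm⟩ := integrable_backlund_boundary_terms ha hφ' hψ' hφt hψt h₁ h₂
  have hMφ : Integrable (fun x => φ' x * φt x) μ := hφ'.integrable_mul hφt
  calc _ = ∫ x, 1 / 2 * (ψ' x * ψt x) ∂μ := (integral_const_mul _ _).symm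
    _ = ∫ x, (1 / 2 * (φ' x * φt x)
          + 1 / a * (sin ((ψ x + φ x) / 2) * (ψ' x + φ' x) / 2)
          - a * (sin ((ψ x - φ x) / 2) * (ψ' x - φ' x) / 2)) ∂μ :=
        integral_congr_ae (.of_forall fun x => backlund_momentum_density_eq (h₁ x) (h₂ x))
    _ = _ := by
        rw [integral_sub ((hMφ.const_mul _).fun_add (hBp.const_mul _)) (hBm.const_mul _),
          integral_add (hMφ.const_mul _) (hBp.const_mul _), integral_const_mul,
          integral_const_mul, integral_const_mul]

end Integrals

theorem backlund_energy_momentum_general (a : ℂ) (ha : a ≠ 0)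
    (φ ψ φt ψt : ℝ → ℂ)
    (hφdiff : Differentiable ℝ φ) (hψdiff : Differentiable ℝ ψ)
    (hφ'L2 : MemLp (deriv φ) 2 volume) (hψ'L2 : MemLp (deriv ψ) 2 volume)
    (hφtL2 : MemLp φt 2 volume) (hψtL2 : MemLp ψt 2 volume)
    (hφsinL2 : MemLp (fun x => Complex.sin (φ x / 2)) 2 volume)
    (hψsinL2 : MemLp (fun x => Complex.sin (ψ x / 2)) 2 volume)
    (hBT1 : ∀ x : ℝ,
      deriv ψ x - φt x
        = (1 / a) * Complex.sin ((ψ x + φ x) / 2)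
          + a * Complex.sin ((ψ x - φ x) / 2))
    (hBT2 : ∀ x : ℝ,
      ψt x - deriv φ x
        = (1 / a) * Complex.sin ((ψ x + φ x) / 2)
          - a * Complex.sin ((ψ x - φ x) / 2))
    (ℓpp ℓmp ℓpm ℓmm : ℂ)
    (hℓpp : Tendsto (fun x => 1 - Complex.cos ((ψ x + φ x) / 2)) atTop (nhds ℓpp))
    (hℓmp : Tendsto (fun x => 1 - Complex.cos ((ψ x + φ x) / 2)) atBot (nhds ℓmp))
    (hℓpm : Tendsto (fun x => 1 - Complex.cos ((ψ x - φ x) / 2)) atTop (nhds ℓpm))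
    (hℓmm : Tendsto (fun x => 1 - Complex.cos ((ψ x - φ x) / 2)) atBot (nhds ℓmm)) :
    ((1 / 2 : ℂ) * ∫ x : ℝ, ((deriv ψ x) ^ 2 + (ψt x) ^ 2))
        + (∫ x : ℝ, (1 - Complex.cos (ψ x)))
      = ((1 / 2 : ℂ) * ∫ x : ℝ, ((deriv φ x) ^ 2 + (φt x) ^ 2))
          + (∫ x : ℝ, (1 - Complex.cos (φ x)))
          + (2 / a) * (ℓpp - ℓmp) + 2 * a * (ℓpm - ℓmm) ∧
    (1 / 2 : ℂ) * ∫ x : ℝ, deriv ψ x * ψt x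
      = ((1 / 2 : ℂ) * ∫ x : ℝ, deriv φ x * φt x)
          + (1 / a) * (ℓpp - ℓmp) - a * (ℓpm - ℓmm) := by
  have hDp : ∀ x, HasDerivAt (fun y => 1 - cos ((ψ y + φ y) / 2))
      (sin ((ψ x + φ x) / 2) * (deriv ψ x + deriv φ x) / 2) x := fun x =>
    hasDerivAt_one_sub_cos_half ((hψdiff x).hasDerivAt.fun_add (hφdiff x).hasDerivAt)
  have hDm : ∀ x, HasDerivAt (fun y => 1 - cos ((ψ y - φ y) / 2))
      (sin ((ψ x - φ x) / 2) * (deriv ψ x - deriv φ x) / 2) x := fun x =>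
    hasDerivAt_one_sub_cos_half ((hψdiff x).hasDerivAt.fun_sub (hφdiff x).hasDerivAt)
  obtain ⟨hBp, hBm⟩ :=
    integrable_backlund_boundary_terms ha hφ'L2 hψ'L2 hφtL2 hψtL2 hBT1 hBT2
  rw [← integral_of_hasDerivAt_of_tendsto hDp hBp hℓmp hℓpp,
    ← integral_of_hasDerivAt_of_tendsto hDm hBm hℓmm hℓpm]
  exact ⟨backlund_energy_integral_eq ha hφ'L2 hψ'L2 hφtL2 hψtL2 hφsinL2 hψsinL2 hBT1 hBT2,
    backlund_momentum_integral_eq ha hφ'L2 hψ'L2 hφtL2 hψtL2 hBT1 hBT2⟩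

/-- **Bäcklund transformation and conserved quantities (Lemma 2.4).**
If `(ψ, ψₜ)` is a Bäcklund transform of `(φ, φₜ)` with parameter `a ≠ 0`, with both
profiles bounded and the natural `L²` integrability assumptions, and if the four limits
`ℓ₊⁺, ℓ₋⁺, ℓ₊⁻, ℓ₋⁻` of `1 − cos((ψ±φ)/2)` at `±∞` exist, then the sine-Gordon
energy and momentum of `(ψ, ψₜ)` and `(φ, φₜ)` are related by explicit boundary terms. -/
theorem backlund_energy_momentum (a : ℂ) (ha : a ≠ 0)
    (φ ψ φt ψt : ℝ → ℂ)
    (hφbdd : ∃ C : ℝ, ∀ x : ℝ, ‖φ x‖ ≤ C) (hψbdd : ∃ C : ℝ, ∀ x : ℝ, ‖ψ x‖ ≤ C)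
    (hφdiff : Differentiable ℝ φ) (hψdiff : Differentiable ℝ ψ)
    (hφtmeas : Measurable φt) (hψtmeas : Measurable ψt)
    (hφ'L2 : MemLp (deriv φ) 2 volume) (hψ'L2 : MemLp (deriv ψ) 2 volume)
    (hφtL2 : MemLp φt 2 volume) (hψtL2 : MemLp ψt 2 volume)
    (hφsinL2 : MemLp (fun x => Complex.sin (φ x / 2)) 2 volume)
    (hψsinL2 : MemLp (fun x => Complex.sin (ψ x / 2)) 2 volume)
    (hBT1 : ∀ x : ℝ,
      deriv ψ x - φt x
        = (1 / a) * Complex.sin ((ψ x + φ x) / 2)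
          + a * Complex.sin ((ψ x - φ x) / 2))
    (hBT2 : ∀ x : ℝ,
      ψt x - deriv φ x
        = (1 / a) * Complex.sin ((ψ x + φ x) / 2)
          - a * Complex.sin ((ψ x - φ x) / 2))
    (ℓpp ℓmp ℓpm ℓmm : ℂ)
    (hℓpp : Tendsto (fun x => 1 - Complex.cos ((ψ x + φ x) / 2)) atTop (nhds ℓpp))
    (hℓmp : Tendsto (fun x => 1 - Complex.cos ((ψ x + φ x) / 2)) atBot (nhds ℓmp))
    (hℓpm : Tendsto (fun x => 1 - Complex.cos ((ψ x - φ x) / 2)) atTop (nhds ℓpm))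
    (hℓmm : Tendsto (fun x => 1 - Complex.cos ((ψ x - φ x) / 2)) atBot (nhds ℓmm)) :
    ((1 / 2 : ℂ) * ∫ x : ℝ, ((deriv ψ x) ^ 2 + (ψt x) ^ 2))
        + (∫ x : ℝ, (1 - Complex.cos (ψ x)))
      = ((1 / 2 : ℂ) * ∫ x : ℝ, ((deriv φ x) ^ 2 + (φt x) ^ 2))
          + (∫ x : ℝ, (1 - Complex.cos (φ x)))
          + (2 / a) * (ℓpp - ℓmp) + 2 * a * (ℓpm - ℓmm) ∧
    (1 / 2 : ℂ) * ∫ x : ℝ, deriv ψ x * ψt x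
      = ((1 / 2 : ℂ) * ∫ x : ℝ, deriv φ x * φt x)
          + (1 / a) * (ℓpp - ℓmp) - a * (ℓpm - ℓmm) :=
  backlund_energy_momentum_general a ha φ ψ φt ψt hφdiff hψdiff hφ'L2 hψ'L2 hφtL2 hψtL2 hφsinL2
    hψsinL2 hBT1 hBT2 ℓpp ℓmp ℓpm ℓmm hℓpp hℓmp hℓpm hℓmm
end

section
/- Fix β real with 0 < |β| < 1, set α = √(1−β²), fix x₁, x₂ ∈ ℝ, and define tₖ = −x₁ + (π/α)(1/2 + k) for k ∈ ℤ. Define u(t,x) = 4·arctan(exp(β(x+x₂) + iα(t+x₁))), arctan being the principal complex arctangent. Then: (a) u is smooth on the open set {(t,x) ∈ ℝ² : t ≠ tₖ for every k ∈ ℤ} and satisfies the complex sine-Gordon equation ∂ₜₜu − ∂ₓₓu + sin u = 0 at every such point; (b) for every t not equal to any tₖ, sup_{x∈ℝ} |∂ₜu(t,x)| ≥ 2α/|cos(α(t+x₁))|, so that ‖∂ₜu(t,·)‖_{L^∞(ℝ)} tends to +∞ as t tends to any tₖ (blow-up of the complex-valued kink in finite time). -/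
open Filter Complex Topology

namespace CKAux

lemma one_sub_ne {z : ℂ} (hz : z.re ≠ 0) : 1 - z * I ≠ 0 := by
  intro h
  apply hz
  simpa using congrArg Complex.im h

lemma one_add_ne {z : ℂ} (hz : z.re ≠ 0) : 1 + z * I ≠ 0 := by
  intro h
  apply hz
  simpa using congrArg Complex.im h

lemma factor (z : ℂ) : (1 - z * I) * (1 + z * I) = 1 + z ^ 2 := by
  linear_combination (-(z^2)) * Complex.I_sq

lemma one_add_sq_ne {z : ℂ} (hz : z.re ≠ 0) : 1 + z ^ 2 ≠ 0 := by
  rw [← factor]; exact mul_ne_zero (one_sub_ne hz) (one_add_ne hz)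

lemma w_mem_slit {z : ℂ} (hz : z.re ≠ 0) : (1 + z * I) / (1 - z * I) ∈ Complex.slitPlane := by
  rw [Complex.mem_slitPlane_iff]
  right
  rw [Complex.div_im]
  have hns : Complex.normSq (1 - z * I) ≠ 0 := by
    simpa using one_sub_ne hz
  have : (1 + z * I).im * (1 - z * I).re - (1 + z * I).re * (1 - z * I).im = 2 * z.re := by
    simp; ring
  rw [div_sub_div_same, this]
  exact div_ne_zero (by simpa using hz) hns

lemma hasDerivAt_arctan {z : ℂ} (hz : z.re ≠ 0) :
    HasDerivAt Complex.arctan (1 + z ^ 2)⁻¹ z := by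
  have h1 := one_sub_ne hz
  have h2 := one_add_ne hz
  have h4 := one_add_sq_ne hz
  have hw : HasDerivAt (fun z : ℂ => (1 + z * I) / (1 - z * I))
      (2 * I / (1 - z * I) ^ 2) z := by
    have hn : HasDerivAt (fun z : ℂ => 1 + z * I) I z := by
      simpa using ((hasDerivAt_id z).mul_const I).const_add 1
    have hd : HasDerivAt (fun z : ℂ => 1 - z * I) (-I) z := by
      simpa using ((hasDerivAt_id z).mul_const I).const_sub 1
    have := hn.div hd h1
    refine HasDerivAt.congr_deriv this ?_
    field_simp
    ring
  have hlog := (Complex.hasDerivAt_log (w_mem_slit hz)).comp z hw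
  have := hlog.const_mul (-I / 2)
  have harctan : Complex.arctan = fun z : ℂ =>
      -I / 2 * Complex.log ((1 + z * I) / (1 - z * I)) := rfl
  rw [harctan]
  refine HasDerivAt.congr_deriv this ?_
  field_simp
  rw [show (1 + I * z) * (1 - I * z) = 1 + z ^ 2 by linear_combination (-(z^2)) * Complex.I_sq,
    Complex.I_sq]
  field_simp

lemma contDiffAt_arctan {z : ℂ} (hz : z.re ≠ 0) :
    ContDiffAt ℝ (⊤ : ℕ∞) Complex.arctan z := by
  have hopen : IsOpen {w : ℂ | w.re ≠ 0} :=
    isOpen_ne.preimage Complex.continuous_re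
  have hdiff : DifferentiableOn ℂ Complex.arctan {w : ℂ | w.re ≠ 0} := fun w hw =>
    (hasDerivAt_arctan hw).differentiableAt.differentiableWithinAt
  have hA : AnalyticAt ℂ Complex.arctan z := hdiff.analyticAt (hopen.mem_nhds hz)
  exact (hA.restrictScalars (𝕜 := ℝ)).contDiffAt

lemma sin_four_arctan {z : ℂ} (hz : z.re ≠ 0) :
    Complex.sin (4 * Complex.arctan z) = 4 * z * (1 - z ^ 2) / (1 + z ^ 2) ^ 2 := by
  have h4 := one_add_sq_ne hz
  have hzI : z ≠ I := fun h => hz (by rw [h]; simp)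
  have hzI' : z ≠ -I := fun h => hz (by rw [h]; simp)
  have htan := Complex.tan_arctan hzI hzI'
  set a := Complex.arctan z with ha
  have hcos : Complex.cos a ≠ 0 := by
    intro h
    apply hz
    rw [Complex.tan_eq_sin_div_cos, h, div_zero] at htan
    rw [← htan]; simp
  have hsin : Complex.sin a = z * Complex.cos a := by
    rw [Complex.tan_eq_sin_div_cos] at htan
    field_simp at htan
    exact htan.trans (mul_comm _ _)
  have hkey : (1 + z ^ 2) * Complex.cos a ^ 2 = 1 := by
    linear_combination Complex.sin_sq_add_cos_sq a
      - (Complex.sin a + z * Complex.cos a) * hsin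
  rw [show (4 : ℂ) * a = 2 * (2 * a) by ring, Complex.sin_two_mul, Complex.sin_two_mul,
    Complex.cos_two_mul, eq_div_iff (pow_ne_zero 2 h4)]
  linear_combination (4 * Complex.cos a * (2 * Complex.cos a ^ 2 - 1) * (1 + z ^ 2) ^ 2) * hsin
    + (4 * z * (2 * ((1 + z ^ 2) * Complex.cos a ^ 2) + 1 - z ^ 2)) * hkey

lemma key1 (c d : ℂ) {w : ℂ} (h : (Complex.exp (c + d * w)).re ≠ 0) :
    HasDerivAt (fun z : ℂ => 4 * Complex.arctan (Complex.exp (c + d * z)))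
      (4 * d * Complex.exp (c + d * w) / (1 + Complex.exp (c + d * w) ^ 2)) w := by
  set E := Complex.exp (c + d * w) with hE
  have hinner : HasDerivAt (fun z : ℂ => c + d * z) d w := by
    simpa using ((hasDerivAt_id w).const_mul d).const_add c
  have hexp : HasDerivAt (fun z : ℂ => Complex.exp (c + d * z)) (E * d) w :=
    (Complex.hasDerivAt_exp _).comp w hinner
  have harc : HasDerivAt (fun z : ℂ => Complex.arctan (Complex.exp (c + d * z)))
      ((1 + E ^ 2)⁻¹ * (E * d)) w := by
    have := (hasDerivAt_arctan h).comp w hexp; exact this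
  have := harc.const_mul (4 : ℂ)
  refine HasDerivAt.congr_deriv this ?_
  have h4 := one_add_sq_ne h
  field_simp

lemma key2 (c d : ℂ) {w : ℂ} (h : (Complex.exp (c + d * w)).re ≠ 0) :
    HasDerivAt (fun z : ℂ => 4 * d * Complex.exp (c + d * z) / (1 + Complex.exp (c + d * z) ^ 2))
      (4 * d ^ 2 * Complex.exp (c + d * w) * (1 - Complex.exp (c + d * w) ^ 2)
        / (1 + Complex.exp (c + d * w) ^ 2) ^ 2) w := by
  set E := Complex.exp (c + d * w) with hE
  have hinner : HasDerivAt (fun z : ℂ => c + d * z) d w := by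
    simpa using ((hasDerivAt_id w).const_mul d).const_add c
  have hexp : HasDerivAt (fun z : ℂ => Complex.exp (c + d * z)) (E * d) w :=
    (Complex.hasDerivAt_exp _).comp w hinner
  have hnum : HasDerivAt (fun z : ℂ => 4 * d * Complex.exp (c + d * z)) (4 * d * (E * d)) w :=
    hexp.const_mul (4 * d)
  have hden : HasDerivAt (fun z : ℂ => 1 + Complex.exp (c + d * z) ^ 2) (2 * E ^ 1 * (E * d)) w := by
    simpa using ((hexp.pow 2).const_add 1)
  have h4 := one_add_sq_ne h
  have := hnum.div hden h4
  refine HasDerivAt.congr_deriv this ?_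
  rw [← hE]
  field_simp
  ring

lemma sq_abs_one_add_exp_sq (a b : ℝ) :
    ‖1 + Complex.exp ((a : ℂ) + (b : ℂ) * I) ^ 2‖ ^ 2
      = (1 - Real.exp a ^ 2) ^ 2 + (2 * Real.exp a * Real.cos b) ^ 2 := by
  have hsq : Complex.exp ((a : ℂ) + (b : ℂ) * I) ^ 2
      = Complex.exp (((2 * a : ℝ) : ℂ) + ((2 * b : ℝ) : ℂ) * I) := by
    rw [sq, ← Complex.exp_add]
    congr 1
    push_cast
    ring
  rw [hsq, Complex.sq_norm, Complex.normSq_apply]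
  simp only [Complex.add_re, Complex.add_im, Complex.one_re, Complex.one_im,
    Complex.exp_re, Complex.exp_im, Complex.ofReal_re, Complex.ofReal_im,
    Complex.mul_re, Complex.mul_im, Complex.I_re, Complex.I_im]
  have h2a : Real.exp (2 * a) = Real.exp a ^ 2 := by
    rw [two_mul, Real.exp_add]; ring
  have h2b : Real.cos (2 * b) = 2 * Real.cos b ^ 2 - 1 := Real.cos_two_mul b
  have hpy : Real.sin (2 * b) ^ 2 = 1 - Real.cos (2 * b) ^ 2 := by
    have := Real.sin_sq_add_cos_sq (2 * b); linarith
  have e1 : Real.exp (a * 2) = Real.exp a ^ 2 := by rw [mul_comm]; exact h2a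
  have e2 : Real.cos (b * 2) = 2 * Real.cos b ^ 2 - 1 := by rw [mul_comm]; exact h2b
  have e3 : Real.sin (b * 2) ^ 2 = 1 - Real.cos (b * 2) ^ 2 := by rw [mul_comm]; exact hpy
  ring_nf
  rw [e3, e2, e1]
  ring

lemma abs_one_add_exp_sq_ge (a b : ℝ) :
    2 * Real.exp a * |Real.cos b|
      ≤ ‖1 + Complex.exp ((a : ℂ) + (b : ℂ) * I) ^ 2‖ := by
  set A := ‖1 + Complex.exp ((a : ℂ) + (b : ℂ) * I) ^ 2‖ with hA
  have hA0 : 0 ≤ A := norm_nonneg _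
  have ht0 : 0 ≤ 2 * Real.exp a * |Real.cos b| := by positivity
  have hsq := sq_abs_one_add_exp_sq a b
  have hle : (2 * Real.exp a * |Real.cos b|) ^ 2 ≤ A ^ 2 := by
    rw [hsq]
    have : (2 * Real.exp a * |Real.cos b|) ^ 2 = (2 * Real.exp a * Real.cos b) ^ 2 := by
      rw [mul_pow, mul_pow, _root_.sq_abs]; ring
    rw [this]
    nlinarith [sq_nonneg (1 - Real.exp a ^ 2)]
  calc 2 * Real.exp a * |Real.cos b| = Real.sqrt ((2 * Real.exp a * |Real.cos b|) ^ 2) :=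
        (Real.sqrt_sq ht0).symm
    _ ≤ Real.sqrt (A ^ 2) := Real.sqrt_le_sqrt hle
    _ = A := Real.sqrt_sq hA0

lemma abs_one_add_exp_sq_zero (b : ℝ) :
    ‖1 + Complex.exp (((0 : ℝ) : ℂ) + (b : ℂ) * I) ^ 2‖ = 2 * |Real.cos b| := by
  have hsq := sq_abs_one_add_exp_sq 0 b
  have hA0 : 0 ≤ ‖1 + Complex.exp (((0 : ℝ) : ℂ) + (b : ℂ) * I) ^ 2‖ :=
    norm_nonneg _
  have : ‖1 + Complex.exp (((0 : ℝ) : ℂ) + (b : ℂ) * I) ^ 2‖ ^ 2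
      = (2 * Real.cos b) ^ 2 := by
    rw [hsq]; norm_num
  calc ‖1 + Complex.exp (((0 : ℝ) : ℂ) + (b : ℂ) * I) ^ 2‖
      = Real.sqrt (‖1 + Complex.exp (((0 : ℝ) : ℂ) + (b : ℂ) * I) ^ 2‖ ^ 2) :=
        (Real.sqrt_sq hA0).symm
    _ = Real.sqrt ((2 * Real.cos b) ^ 2) := by rw [this]
    _ = |2 * Real.cos b| := Real.sqrt_sq_eq_abs _
    _ = 2 * |Real.cos b| := by rw [abs_mul]; norm_num

end CKAux

/-- **The complex-valued kink: smooth solution away from singular times and blow-up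
(Lemma 3.3).** For `0 < |β| < 1`, `α = √(1−β²)`, the function
`u(t,x) = 4 arctan(exp(β(x+x₂) + iα(t+x₁)))` is smooth on the set of `(t,x)` with
`t ≠ tₖ` and solves the complex sine-Gordon equation there; moreover its time derivative
blows up in `L^∞` as `t` approaches any `tₖ = −x₁ + (π/α)(1/2 + k)`. -/
theorem complex_kink_solution_and_blowup (β x₁ x₂ : ℝ)
    (hβ0 : 0 < |β|) (hβ1 : |β| < 1)
    (α : ℝ) (hα : α = Real.sqrt (1 - β ^ 2))
    (tk : ℤ → ℝ) (htk : ∀ k : ℤ, tk k = -x₁ + (Real.pi / α) * (1 / 2 + (k : ℝ)))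
    (u : ℝ → ℝ → ℂ)
    (hu : ∀ t x : ℝ, u t x
      = 4 * Complex.arctan (Complex.exp ((β : ℂ) * ((x : ℂ) + (x₂ : ℂ))
          + Complex.I * (α : ℂ) * ((t : ℂ) + (x₁ : ℂ))))) :
    -- (a) smoothness on the good set and the sine-Gordon equation there
    (ContDiffOn ℝ (⊤ : ℕ∞) (fun p : ℝ × ℝ => u p.1 p.2)
      {p : ℝ × ℝ | ∀ k : ℤ, p.1 ≠ tk k}) ∧
    (∀ t x : ℝ, (∀ k : ℤ, t ≠ tk k) →
      deriv (fun s => deriv (fun s' => u s' x) s) t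
        - deriv (fun y => deriv (fun y' => u t y') y) x
        + Complex.sin (u t x) = 0) ∧
    -- (b) lower bound on the sup norm of the time derivative
    (∀ t : ℝ, (∀ k : ℤ, t ≠ tk k) →
      2 * α / |Real.cos (α * (t + x₁))|
        ≤ ⨆ x : ℝ, ‖deriv (fun s => u s x) t‖) ∧
    -- so that ‖∂ₜu(t,·)‖_{L^∞} blows up as t → tₖ
    (∀ k : ℤ, Tendsto (fun t : ℝ => ⨆ x : ℝ, ‖deriv (fun s => u s x) t‖)
      (𝓝[≠] (tk k)) atTop) := by
  have hb2 : β ^ 2 < 1 := by nlinarith [_root_.sq_abs β, abs_nonneg β]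
  have hα0 : 0 < α := by rw [hα]; exact Real.sqrt_pos.mpr (by linarith)
  have hα2 : α ^ 2 = 1 - β ^ 2 := by rw [hα]; exact Real.sq_sqrt (by linarith)
  -- the good-set criterion
  have good_iff : ∀ t : ℝ, (∀ k : ℤ, t ≠ tk k) ↔ Real.cos (α * (t + x₁)) ≠ 0 := by
    intro t
    have key : Real.cos (α * (t + x₁)) = 0 ↔ ∃ k : ℤ, t = tk k := by
      rw [Real.cos_eq_zero_iff]
      constructor
      · rintro ⟨k, hk⟩
        refine ⟨k, ?_⟩
        rw [htk k]
        have hαne := hα0.ne'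
        field_simp at hk ⊢
        linarith
      · rintro ⟨k, hk⟩
        refine ⟨k, ?_⟩
        rw [hk, htk k]
        have hαne := hα0.ne'
        field_simp
        ring
    constructor
    · intro h hc
      obtain ⟨k, hk⟩ := key.mp hc
      exact h k hk
    · intro h k hk
      exact h (key.mpr ⟨k, hk⟩)
  -- real part of exp θ
  have hre : ∀ t x : ℝ,
      (Complex.exp ((β : ℂ) * ((x : ℂ) + (x₂ : ℂ))
        + Complex.I * (α : ℂ) * ((t : ℂ) + (x₁ : ℂ)))).re
      = Real.exp (β * (x + x₂)) * Real.cos (α * (t + x₁)) := by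
    intro t x
    have h1 : (β : ℂ) * ((x : ℂ) + (x₂ : ℂ)) + Complex.I * (α : ℂ) * ((t : ℂ) + (x₁ : ℂ))
        = ((β * (x + x₂) : ℝ) : ℂ) + ((α * (t + x₁) : ℝ) : ℂ) * Complex.I := by
      push_cast; ring
    rw [h1, Complex.exp_re]
    simp
  have hgoodre : ∀ t x : ℝ, Real.cos (α * (t + x₁)) ≠ 0 →
      (Complex.exp ((β : ℂ) * ((x : ℂ) + (x₂ : ℂ))
        + Complex.I * (α : ℂ) * ((t : ℂ) + (x₁ : ℂ)))).re ≠ 0 := by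
    intro t x h
    rw [hre t x]
    exact mul_ne_zero (Real.exp_pos _).ne' h
  -- time derivative
  set d₁ : ℂ := Complex.I * (α : ℂ) with hd₁
  have hθt : ∀ t x : ℝ, (β : ℂ) * ((x : ℂ) + (x₂ : ℂ))
      + Complex.I * (α : ℂ) * ((t : ℂ) + (x₁ : ℂ))
      = ((β : ℂ) * ((x : ℂ) + (x₂ : ℂ)) + Complex.I * (α : ℂ) * (x₁ : ℂ)) + d₁ * (t : ℂ) := by
    intro t x; rw [hd₁]; ring
  have hut : ∀ x t : ℝ, Real.cos (α * (t + x₁)) ≠ 0 →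
      HasDerivAt (fun s : ℝ => u s x)
        (4 * d₁ * Complex.exp ((β : ℂ) * ((x : ℂ) + (x₂ : ℂ))
            + Complex.I * (α : ℂ) * ((t : ℂ) + (x₁ : ℂ)))
          / (1 + Complex.exp ((β : ℂ) * ((x : ℂ) + (x₂ : ℂ))
            + Complex.I * (α : ℂ) * ((t : ℂ) + (x₁ : ℂ))) ^ 2)) t := by
    intro x t h
    set c := (β : ℂ) * ((x : ℂ) + (x₂ : ℂ)) + Complex.I * (α : ℂ) * (x₁ : ℂ) with hc
    have hre' : (Complex.exp (c + d₁ * (t : ℂ))).re ≠ 0 := by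
      rw [← hθt t x]; exact hgoodre t x h
    have hfun : (fun s : ℝ => u s x)
        = fun y : ℝ => 4 * Complex.arctan (Complex.exp (c + d₁ * (y : ℂ))) :=
      funext fun s => by rw [hu s x, hθt s x]
    rw [hfun, hθt t x]
    exact (CKAux.key1 c d₁ hre').comp_ofReal
  -- part (b) lower bound, for good t
  have hsup : ∀ t : ℝ, Real.cos (α * (t + x₁)) ≠ 0 →
      2 * α / |Real.cos (α * (t + x₁))| ≤ ⨆ x : ℝ, ‖deriv (fun s => u s x) t‖ := by
    intro t h
    have hnorm : ∀ x : ℝ, ‖deriv (fun s => u s x) t‖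
        = 4 * α * Real.exp (β * (x + x₂))
          / ‖1 + Complex.exp (((β * (x + x₂) : ℝ) : ℂ)
              + ((α * (t + x₁) : ℝ) : ℂ) * Complex.I) ^ 2‖ := by
      intro x
      rw [(hut x t h).deriv]
      have hab : (β : ℂ) * ((x : ℂ) + (x₂ : ℂ)) + Complex.I * (α : ℂ) * ((t : ℂ) + (x₁ : ℂ))
          = ((β * (x + x₂) : ℝ) : ℂ) + ((α * (t + x₁) : ℝ) : ℂ) * Complex.I := by
        push_cast; ring
      rw [hab]
      have h4n : ‖(4 : ℂ)‖ = 4 := by norm_num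
      have hdn : ‖d₁‖ = α := by
        simp [hd₁, abs_of_pos hα0]
      have hen : ‖Complex.exp (((β * (x + x₂) : ℝ) : ℂ) + ((α * (t + x₁) : ℝ) : ℂ) * Complex.I)‖
          = Real.exp (β * (x + x₂)) := by
        rw [Complex.norm_exp]; simp
      rw [norm_div, norm_mul, norm_mul, h4n, hdn, hen]
    have hle : ∀ x : ℝ, ‖deriv (fun s => u s x) t‖ ≤ 2 * α / |Real.cos (α * (t + x₁))| := by
      intro x
      rw [hnorm x]
      have hge := CKAux.abs_one_add_exp_sq_ge (β * (x + x₂)) (α * (t + x₁))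
      have hA0 : 0 < ‖1 + Complex.exp (((β * (x + x₂) : ℝ) : ℂ)
          + ((α * (t + x₁) : ℝ) : ℂ) * Complex.I) ^ 2‖ := by
        refine lt_of_lt_of_le ?_ hge
        have := Real.exp_pos (β * (x + x₂))
        have := abs_pos.mpr h
        positivity
      rw [div_le_div_iff₀ hA0 (abs_pos.mpr h)]
      nlinarith [Real.exp_pos (β * (x + x₂)), hα0, abs_nonneg (Real.cos (α * (t + x₁)))]
    have hval : ‖deriv (fun s => u s (-x₂)) t‖ = 2 * α / |Real.cos (α * (t + x₁))| := by
      rw [hnorm (-x₂)]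
      have h0 : β * (-x₂ + x₂) = (0 : ℝ) := by ring
      rw [h0, CKAux.abs_one_add_exp_sq_zero (α * (t + x₁)), Real.exp_zero]
      have := abs_pos.mpr h
      field_simp
      ring
    have hbdd : BddAbove (Set.range fun x : ℝ => ‖deriv (fun s => u s x) t‖) := by
      refine ⟨2 * α / |Real.cos (α * (t + x₁))|, ?_⟩
      rintro _ ⟨x, rfl⟩
      exact hle x
    calc 2 * α / |Real.cos (α * (t + x₁))| = ‖deriv (fun s => u s (-x₂)) t‖ := hval.symm
      _ ≤ ⨆ x : ℝ, ‖deriv (fun s => u s x) t‖ := le_ciSup hbdd (-x₂)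
  -- part (b) blow-up
  have hblow : ∀ k : ℤ, Tendsto (fun t : ℝ => ⨆ x : ℝ, ‖deriv (fun s => u s x) t‖)
      (𝓝[≠] (tk k)) atTop := by
    intro k
    have hπα : 0 < Real.pi / α := div_pos Real.pi_pos hα0
    have hspace : ∀ j : ℤ, j ≠ k → Real.pi / α ≤ |tk j - tk k| := by
      intro j hj
      have he : tk j - tk k = (Real.pi / α) * ((j : ℝ) - (k : ℝ)) := by
        rw [htk j, htk k]; ring
      rw [he, abs_mul, abs_of_pos hπα]
      have h1 : (1 : ℝ) ≤ |(j : ℝ) - (k : ℝ)| := by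
        rw [show ((j : ℝ) - (k : ℝ)) = ((j - k : ℤ) : ℝ) by push_cast; ring]
        rw [← Int.cast_abs]
        exact_mod_cast Int.one_le_abs (sub_ne_zero.mpr hj)
      nlinarith
    have hgood : ∀ᶠ t in 𝓝[≠] (tk k), ∀ j : ℤ, t ≠ tk j := by
      have h1 : ∀ᶠ t in 𝓝[≠] (tk k), |t - tk k| < Real.pi / α := by
        apply eventually_nhdsWithin_of_eventually_nhds
        filter_upwards [Metric.ball_mem_nhds (tk k) hπα] with t ht
        rwa [Metric.mem_ball, Real.dist_eq] at ht
      have h2 : ∀ᶠ t in 𝓝[≠] (tk k), t ≠ tk k := eventually_mem_nhdsWithin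
      filter_upwards [h1, h2] with t h1t h2t j
      by_cases hj : j = k
      · rw [hj]; exact h2t
      · intro he
        have hs := hspace j hj
        rw [← he] at hs
        linarith
    have hcos0 : Real.cos (α * (tk k + x₁)) = 0 := by
      apply Real.cos_eq_zero_iff.mpr
      refine ⟨k, ?_⟩
      rw [htk k]
      have := hα0.ne'
      field_simp
      ring
    have htend : Tendsto (fun t : ℝ => |Real.cos (α * (t + x₁))|) (𝓝[≠] tk k) (𝓝[>] 0) := by
      rw [tendsto_nhdsWithin_iff]
      constructor
      · have hc : ContinuousAt (fun t : ℝ => |Real.cos (α * (t + x₁))|) (tk k) := by fun_prop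
        have h0 := hc.tendsto
        rw [show |Real.cos (α * (tk k + x₁))| = 0 by rw [hcos0, abs_zero]] at h0
        exact h0.mono_left nhdsWithin_le_nhds
      · filter_upwards [hgood] with t ht
        exact Set.mem_Ioi.mpr (abs_pos.mpr ((good_iff t).mp ht))
    have hb : Tendsto (fun t : ℝ => 2 * α / |Real.cos (α * (t + x₁))|) (𝓝[≠] tk k) atTop := by
      have hinv : Tendsto (fun t : ℝ => (|Real.cos (α * (t + x₁))|)⁻¹)
          (𝓝[≠] tk k) atTop := htend.inv_tendsto_nhdsGT_zero
      have h2α : (0 : ℝ) < 2 * α := by positivity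
      have := (tendsto_const_mul_atTop_of_pos h2α).mpr hinv
      simpa [div_eq_mul_inv] using this
    exact tendsto_atTop_mono' _ (hgood.mono fun t ht => hsup t ((good_iff t).mp ht)) hb
  -- the PDE
  have hpde : ∀ t x : ℝ, Real.cos (α * (t + x₁)) ≠ 0 →
      deriv (fun s => deriv (fun s' => u s' x) s) t
        - deriv (fun y => deriv (fun y' => u t y') y) x
        + Complex.sin (u t x) = 0 := by
    intro t x h
    have hre' : ∀ s : ℝ, Real.cos (α * (s + x₁)) ≠ 0 →
        (Complex.exp (((β : ℂ) * ((x : ℂ) + (x₂ : ℂ)) + Complex.I * (α : ℂ) * (x₁ : ℂ))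
          + d₁ * (s : ℂ))).re ≠ 0 := fun s hs => by
      rw [← hθt s x]; exact hgoodre s x hs
    have hev : ∀ᶠ s in 𝓝 t, Real.cos (α * (s + x₁)) ≠ 0 := by
      have hc : ContinuousAt (fun s : ℝ => Real.cos (α * (s + x₁))) t := by fun_prop
      exact hc.eventually_ne h
    have hVeq : (fun s => deriv (fun s' => u s' x) s) =ᶠ[𝓝 t]
        (fun s : ℝ => 4 * d₁ * Complex.exp (((β : ℂ) * ((x : ℂ) + (x₂ : ℂ))
            + Complex.I * (α : ℂ) * (x₁ : ℂ)) + d₁ * (s : ℂ))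
          / (1 + Complex.exp (((β : ℂ) * ((x : ℂ) + (x₂ : ℂ))
            + Complex.I * (α : ℂ) * (x₁ : ℂ)) + d₁ * (s : ℂ)) ^ 2)) := by
      filter_upwards [hev] with s hs
      rw [(hut x s hs).deriv, hθt s x]
    have hd2t : deriv (fun s => deriv (fun s' => u s' x) s) t
        = 4 * d₁ ^ 2 * Complex.exp (((β : ℂ) * ((x : ℂ) + (x₂ : ℂ))
            + Complex.I * (α : ℂ) * (x₁ : ℂ)) + d₁ * (t : ℂ))
          * (1 - Complex.exp (((β : ℂ) * ((x : ℂ) + (x₂ : ℂ))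
            + Complex.I * (α : ℂ) * (x₁ : ℂ)) + d₁ * (t : ℂ)) ^ 2)
          / (1 + Complex.exp (((β : ℂ) * ((x : ℂ) + (x₂ : ℂ))
            + Complex.I * (α : ℂ) * (x₁ : ℂ)) + d₁ * (t : ℂ)) ^ 2) ^ 2 := by
      rw [hVeq.deriv_eq]
      exact ((CKAux.key2 _ d₁ (hre' t h)).comp_ofReal).deriv
    have hθx : ∀ y : ℝ, (β : ℂ) * ((y : ℂ) + (x₂ : ℂ))
        + Complex.I * (α : ℂ) * ((t : ℂ) + (x₁ : ℂ))
        = ((β : ℂ) * (x₂ : ℂ) + Complex.I * (α : ℂ) * ((t : ℂ) + (x₁ : ℂ)))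
          + (β : ℂ) * (y : ℂ) := by
      intro y; ring
    have hrex : ∀ y : ℝ, (Complex.exp (((β : ℂ) * (x₂ : ℂ)
        + Complex.I * (α : ℂ) * ((t : ℂ) + (x₁ : ℂ))) + (β : ℂ) * (y : ℂ))).re ≠ 0 :=
      fun y => by rw [← hθx y]; exact hgoodre t y h
    have hux : ∀ y : ℝ, HasDerivAt (fun y' : ℝ => u t y')
        (4 * (β : ℂ) * Complex.exp (((β : ℂ) * (x₂ : ℂ)
            + Complex.I * (α : ℂ) * ((t : ℂ) + (x₁ : ℂ))) + (β : ℂ) * (y : ℂ))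
          / (1 + Complex.exp (((β : ℂ) * (x₂ : ℂ)
            + Complex.I * (α : ℂ) * ((t : ℂ) + (x₁ : ℂ))) + (β : ℂ) * (y : ℂ)) ^ 2)) y := by
      intro y
      have hfun : (fun y' : ℝ => u t y')
          = fun y' : ℝ => 4 * Complex.arctan (Complex.exp (((β : ℂ) * (x₂ : ℂ)
              + Complex.I * (α : ℂ) * ((t : ℂ) + (x₁ : ℂ))) + (β : ℂ) * (y' : ℂ))) :=
        funext fun y' => by rw [hu t y', hθx y']
      rw [hfun]
      exact (CKAux.key1 _ (β : ℂ) (hrex y)).comp_ofReal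
    have hd2x : deriv (fun y => deriv (fun y' => u t y') y) x
        = 4 * (β : ℂ) ^ 2 * Complex.exp (((β : ℂ) * (x₂ : ℂ)
            + Complex.I * (α : ℂ) * ((t : ℂ) + (x₁ : ℂ))) + (β : ℂ) * (x : ℂ))
          * (1 - Complex.exp (((β : ℂ) * (x₂ : ℂ)
            + Complex.I * (α : ℂ) * ((t : ℂ) + (x₁ : ℂ))) + (β : ℂ) * (x : ℂ)) ^ 2)
          / (1 + Complex.exp (((β : ℂ) * (x₂ : ℂ)
            + Complex.I * (α : ℂ) * ((t : ℂ) + (x₁ : ℂ))) + (β : ℂ) * (x : ℂ)) ^ 2) ^ 2 := by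
      have hXeq : (fun y : ℝ => deriv (fun y' => u t y') y)
          = fun y : ℝ => 4 * (β : ℂ) * Complex.exp (((β : ℂ) * (x₂ : ℂ)
              + Complex.I * (α : ℂ) * ((t : ℂ) + (x₁ : ℂ))) + (β : ℂ) * (y : ℂ))
            / (1 + Complex.exp (((β : ℂ) * (x₂ : ℂ)
              + Complex.I * (α : ℂ) * ((t : ℂ) + (x₁ : ℂ))) + (β : ℂ) * (y : ℂ)) ^ 2) :=
        funext fun y => (hux y).deriv
      rw [hXeq]
      exact ((CKAux.key2 _ (β : ℂ) (hrex x)).comp_ofReal).deriv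
    have hsinu : Complex.sin (u t x)
        = 4 * Complex.exp (((β : ℂ) * ((x : ℂ) + (x₂ : ℂ))
            + Complex.I * (α : ℂ) * (x₁ : ℂ)) + d₁ * (t : ℂ))
          * (1 - Complex.exp (((β : ℂ) * ((x : ℂ) + (x₂ : ℂ))
            + Complex.I * (α : ℂ) * (x₁ : ℂ)) + d₁ * (t : ℂ)) ^ 2)
          / (1 + Complex.exp (((β : ℂ) * ((x : ℂ) + (x₂ : ℂ))
            + Complex.I * (α : ℂ) * (x₁ : ℂ)) + d₁ * (t : ℂ)) ^ 2) ^ 2 := by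
      rw [hu t x, hθt t x]
      exact CKAux.sin_four_arctan (hre' t h)
    have hEE : ((β : ℂ) * (x₂ : ℂ) + Complex.I * (α : ℂ) * ((t : ℂ) + (x₁ : ℂ)))
        + (β : ℂ) * (x : ℂ)
        = ((β : ℂ) * ((x : ℂ) + (x₂ : ℂ)) + Complex.I * (α : ℂ) * (x₁ : ℂ)) + d₁ * (t : ℂ) := by
      rw [hd₁]; ring
    rw [hd2t, hd2x, hEE, hsinu]
    set E := Complex.exp (((β : ℂ) * ((x : ℂ) + (x₂ : ℂ))
      + Complex.I * (α : ℂ) * (x₁ : ℂ)) + d₁ * (t : ℂ)) with hEdef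
    have hne : 1 + E ^ 2 ≠ 0 := CKAux.one_add_sq_ne (hre' t h)
    have hαc : ((α : ℝ) : ℂ) ^ 2 = 1 - ((β : ℝ) : ℂ) ^ 2 := by
      have := congrArg (fun r : ℝ => (r : ℂ)) hα2
      push_cast at this
      exact this
    have hzero : d₁ ^ 2 - ((β : ℝ) : ℂ) ^ 2 + 1 = 0 := by
      rw [hd₁, mul_pow, Complex.I_sq]
      linear_combination -hαc
    rw [← sub_div, ← add_div]
    apply div_eq_zero_iff.mpr
    left
    linear_combination (4 * E * (1 - E ^ 2)) * hzero
  -- smoothness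
  have hsmooth : ContDiffOn ℝ (⊤ : ℕ∞) (fun p : ℝ × ℝ => u p.1 p.2)
      {p : ℝ × ℝ | ∀ k : ℤ, p.1 ≠ tk k} := by
    have hfun : (fun p : ℝ × ℝ => u p.1 p.2)
        = fun p : ℝ × ℝ => 4 * Complex.arctan (Complex.exp ((β : ℂ) * ((p.2 : ℂ) + (x₂ : ℂ))
            + Complex.I * (α : ℂ) * ((p.1 : ℂ) + (x₁ : ℂ)))) :=
      funext fun p => hu p.1 p.2
    have hinner : ContDiff ℝ (⊤ : ℕ∞) (fun p : ℝ × ℝ => Complex.exp ((β : ℂ) * ((p.2 : ℂ) + (x₂ : ℂ))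
        + Complex.I * (α : ℂ) * ((p.1 : ℂ) + (x₁ : ℂ)))) := by
      apply Complex.contDiff_exp.comp
      have h1 : ContDiff ℝ (⊤ : ℕ∞) (fun p : ℝ × ℝ => ((p.1 : ℂ))) :=
        Complex.ofRealCLM.contDiff.comp contDiff_fst
      have h2 : ContDiff ℝ (⊤ : ℕ∞) (fun p : ℝ × ℝ => ((p.2 : ℂ))) :=
        Complex.ofRealCLM.contDiff.comp contDiff_snd
      exact (contDiff_const.mul (h2.add contDiff_const)).add
        (contDiff_const.mul (h1.add contDiff_const))
    intro p hp
    have hcos : Real.cos (α * (p.1 + x₁)) ≠ 0 := (good_iff p.1).mp hp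
    have houter : ContDiffAt ℝ (⊤ : ℕ∞) Complex.arctan
        (Complex.exp ((β : ℂ) * ((p.2 : ℂ) + (x₂ : ℂ))
          + Complex.I * (α : ℂ) * ((p.1 : ℂ) + (x₁ : ℂ)))) :=
      CKAux.contDiffAt_arctan (hgoodre p.1 p.2 hcos)
    rw [hfun]
    exact (contDiffAt_const.mul (houter.comp p hinner.contDiffAt)).contDiffWithinAt
  refine ⟨hsmooth, ?_, ?_, hblow⟩
  · intro t x ht
    exact hpde t x ((good_iff t).mp ht)
  · intro t ht
    exact hsup t ((good_iff t).mp ht)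
end

section
/- Fix β real with 0 < |β| < 1, α = √(1−β²), x₁, x₂ ∈ ℝ with x₁ ≠ (π/α)(1/2+k) for every integer k. Let θ(x) = β(x+x₂) + iα x₁, K(x) = 4·arctan(e^{θ(x)}) and Kₜ(x) = 4iα e^{θ(x)}/(1+e^{2θ(x)}). Then: (1) for all x ∈ ℝ, sin(K(x)/2) = sech(θ(x)) and cos(K(x)/2) = −tanh(θ(x)); (2) for all x ∈ ℝ: K′(x) = [1/(β−iα) + (β−iα)]·sin(K(x)/2) = 2β·sin(K(x)/2) and Kₜ(x) = [1/(β−iα) − (β−iα)]·sin(K(x)/2) = 2iα·sin(K(x)/2); i.e. (K, Kₜ) is a Bäcklund transform of the zero solution (0,0) with parameter β − iα; (3) each of the four functions K′, i·Kₜ, sin(K/2), i·cos(K/2) has even real part and odd imaginary part about the axis x = −x₂: writing f for any of them, Re f(−x₂+y) = Re f(−x₂−y) and Im f(−x₂+y) = −Im f(−x₂−y) for all y ∈ ℝ. -/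
/-!
For `z = e^θ` the definition of `arctan` through the logarithm gives
`exp (2 i arctan z) = (1 + z i) / (1 - z i)`, hence `sin (2 arctan z) = 2z / (1 + z²) = sech θ` and
`cos (2 arctan z) = (1 - z²) / (1 + z²) = -tanh θ`; differentiating through the logarithm gives
`K' = 2β sech θ`, and `Kₜ = 2iα sech θ` is algebra. As `β² + α² = 1`, `1 / (β - iα) = β + iα`, so
both Bäcklund equations over `φ = 0` reduce to these formulas. The nondegeneracy condition says
`cos (Im θ) ≠ 0`, i.e. `Re e^θ ≠ 0`, which keeps the argument of the logarithm off its branch cut.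
Finally `θ (-x₂ - y) = -conj (θ (-x₂ + y))`, and `sech` and `i tanh` commute with `w ↦ -conj w` up
to conjugation, which gives the parities.
-/

open Complex ComplexConjugate

namespace Complex

lemma one_add_mul_I_mul_one_sub_mul_I (z : ℂ) : (1 + z * I) * (1 - z * I) = 1 + z ^ 2 := by
  linear_combination (-z ^ 2) * I_sq

lemma one_add_sq_ne_zero_of_re_ne_zero {z : ℂ} (hz : z.re ≠ 0) : 1 + z ^ 2 ≠ 0 := by
  rw [← one_add_mul_I_mul_one_sub_mul_I]
  refine mul_ne_zero (fun h => hz ?_) (fun h => hz ?_)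
  · simpa using congrArg im h
  · simpa using congrArg im h

lemma one_add_mul_I_div_mem_slitPlane {z : ℂ} (hz : z.re ≠ 0) :
    (1 + z * I) / (1 - z * I) ∈ slitPlane := by
  have hden : 1 - z * I ≠ 0 := right_ne_zero_of_mul
    (one_add_mul_I_mul_one_sub_mul_I z ▸ one_add_sq_ne_zero_of_re_ne_zero hz)
  -- the imaginary part is `2 z.re / ‖1 - z I‖²`
  refine Or.inr ?_
  rw [div_im]
  simp only [add_re, add_im, sub_re, sub_im, mul_re, mul_im, I_re, I_im, one_re, one_im]
  rw [← sub_div]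
  exact div_ne_zero (by ring_nf; simpa using hz) (normSq_pos.2 hden).ne'

lemma exp_two_mul_arctan_mul_I {z : ℂ} (hz : 1 + z ^ 2 ≠ 0) :
    exp (2 * arctan z * I) = (1 + z * I) / (1 - z * I) := by
  rw [← one_add_mul_I_mul_one_sub_mul_I] at hz
  rw [arctan, show 2 * (-I / 2 * log ((1 + z * I) / (1 - z * I))) * I
      = -(I * I) * log ((1 + z * I) / (1 - z * I)) by ring, I_mul_I, neg_neg, one_mul,
    exp_log (div_ne_zero (left_ne_zero_of_mul hz) (right_ne_zero_of_mul hz))]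

lemma sin_two_mul_arctan {z : ℂ} (hz : 1 + z ^ 2 ≠ 0) :
    sin (2 * arctan z) = 2 * z / (1 + z ^ 2) := by
  have h := exp_two_mul_arctan_mul_I hz
  rw [← one_add_mul_I_mul_one_sub_mul_I] at hz ⊢
  have h₁ := left_ne_zero_of_mul hz
  have h₂ := right_ne_zero_of_mul hz
  rw [sin, neg_mul, exp_neg, h]
  field_simp
  linear_combination (-4 * z) * I_sq

lemma cos_two_mul_arctan {z : ℂ} (hz : 1 + z ^ 2 ≠ 0) :
    cos (2 * arctan z) = (1 - z ^ 2) / (1 + z ^ 2) := by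
  have h := exp_two_mul_arctan_mul_I hz
  rw [← one_add_mul_I_mul_one_sub_mul_I] at hz ⊢
  have h₁ := left_ne_zero_of_mul hz
  have h₂ := right_ne_zero_of_mul hz
  rw [cos, neg_mul, exp_neg, h]
  field_simp
  linear_combination (2 * z ^ 2) * I_sq

lemma hasDerivAt_arctan {z : ℂ} (hz : (1 + z * I) / (1 - z * I) ∈ slitPlane) :
    HasDerivAt arctan (1 + z ^ 2)⁻¹ z := by
  have h₁ : 1 + z * I ≠ 0 := fun h => slitPlane_ne_zero hz (by rw [h, zero_div])
  have h₂ : 1 - z * I ≠ 0 := fun h => slitPlane_ne_zero hz (by rw [h, div_zero])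
  have hq := ((hasDerivAt_id z).mul_const I |>.const_add 1).div
    ((hasDerivAt_id z).mul_const I |>.const_sub 1) h₂
  have := (hq.clog hz).const_mul (-I / 2)
  refine this.congr_deriv ?_
  simp only [Pi.div_apply, id]
  rw [← one_add_mul_I_mul_one_sub_mul_I]
  field_simp
  rw [I_sq]
  ring

lemma one_add_exp_sq (θ : ℂ) : 1 + exp θ ^ 2 = 2 * exp θ * cosh θ := by
  rw [cosh, exp_neg]
  field_simp
  ring

lemma one_sub_exp_sq (θ : ℂ) : 1 - exp θ ^ 2 = -(2 * exp θ * sinh θ) := by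
  rw [sinh, exp_neg]
  field_simp
  ring

lemma two_mul_exp_div_one_add_exp_sq (θ : ℂ) : 2 * exp θ / (1 + exp θ ^ 2) = (cosh θ)⁻¹ := by
  rw [one_add_exp_sq, div_mul_cancel_left₀ (mul_ne_zero two_ne_zero (exp_ne_zero θ))]

lemma one_sub_exp_sq_div_one_add_exp_sq (θ : ℂ) :
    (1 - exp θ ^ 2) / (1 + exp θ ^ 2) = -tanh θ := by
  rw [one_sub_exp_sq, one_add_exp_sq, neg_div,
    mul_div_mul_left _ _ (mul_ne_zero two_ne_zero (exp_ne_zero θ)), tanh_eq_sinh_div_cosh]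

lemma exp_re_ne_zero {θ : ℂ} (h : Real.cos θ.im ≠ 0) : (exp θ).re ≠ 0 := by
  rw [exp_re]
  exact mul_ne_zero (Real.exp_ne_zero _) h

lemma cosh_ne_zero_of_cos_im_ne_zero {θ : ℂ} (h : Real.cos θ.im ≠ 0) : cosh θ ≠ 0 := by
  have := one_add_sq_ne_zero_of_re_ne_zero (exp_re_ne_zero h)
  rw [one_add_exp_sq] at this
  exact right_ne_zero_of_mul this

lemma one_add_exp_sq_ne_zero {θ : ℂ} (h : cosh θ ≠ 0) : 1 + exp θ ^ 2 ≠ 0 := by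
  rw [one_add_exp_sq]
  exact mul_ne_zero (mul_ne_zero two_ne_zero (exp_ne_zero θ)) h

lemma sin_two_mul_arctan_exp {θ : ℂ} (h : cosh θ ≠ 0) :
    sin (2 * arctan (exp θ)) = (cosh θ)⁻¹ := by
  rw [sin_two_mul_arctan (one_add_exp_sq_ne_zero h), two_mul_exp_div_one_add_exp_sq]

lemma cos_two_mul_arctan_exp {θ : ℂ} (h : cosh θ ≠ 0) :
    cos (2 * arctan (exp θ)) = -tanh θ := by
  rw [cos_two_mul_arctan (one_add_exp_sq_ne_zero h), one_sub_exp_sq_div_one_add_exp_sq]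

lemma cosh_neg_conj (w : ℂ) : cosh (-conj w) = conj (cosh w) := by
  rw [cosh_neg, cosh_conj]

lemma tanh_neg_conj (w : ℂ) : tanh (-conj w) = -conj (tanh w) := by
  rw [tanh_neg, tanh_conj]

lemma re_eq_and_im_eq_neg_of_conj_eq {z w : ℂ} (h : conj z = w) :
    z.re = w.re ∧ z.im = -w.im := by
  subst h
  simp

lemma one_div_ofReal_sub_I_mul {a b : ℝ} (h : a ^ 2 + b ^ 2 = 1) :
    1 / ((a : ℂ) - I * b) = a + I * b := by
  have hc : (a : ℂ) ^ 2 + (b : ℂ) ^ 2 = 1 := by exact_mod_cast h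
  refine (eq_one_div_of_mul_eq_one_right ?_).symm
  linear_combination hc - (b : ℂ) ^ 2 * I_sq

end Complex

lemma HasDerivAt.arctan_exp {f : ℝ → ℂ} {f' : ℂ} {x : ℝ} (hf : HasDerivAt f f' x)
    (h : Real.cos (f x).im ≠ 0) :
    HasDerivAt (fun t => Complex.arctan (Complex.exp (f t)))
      (f' / (2 * Complex.cosh (f x))) x := by
  refine ((hasDerivAt_arctan (one_add_mul_I_div_mem_slitPlane (exp_re_ne_zero h))).comp x
    hf.cexp).congr_deriv ?_
  rw [one_add_exp_sq]
  field_simp [cosh_ne_zero_of_cos_im_ne_zero h]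

lemma Real.cos_mul_ne_zero_of_forall_ne {a x : ℝ} (ha : a ≠ 0)
    (h : ∀ k : ℤ, x ≠ Real.pi / a * (1 / 2 + k)) :
    Real.cos (a * x) ≠ 0 := by
  refine Real.cos_ne_zero_iff.2 fun k hk => h k ?_
  field_simp
  linear_combination 2 * hk

lemma hasDerivAt_ofReal_affine (β x₂ : ℝ) (c : ℂ) (x : ℝ) :
    HasDerivAt (fun x : ℝ => (β : ℂ) * (x + x₂) + c) β x := by
  simpa using (((hasDerivAt_id (x : ℂ)).comp_ofReal.add_const (x₂ : ℂ)).const_mul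
    (β : ℂ)).add_const c

theorem complex_kink_backlund_of_zero_general (β x₁ x₂ : ℝ) (hβ1 : |β| < 1)
    (α : ℝ) (hα : α = Real.sqrt (1 - β ^ 2))
    (hx₁ : ∀ k : ℤ, x₁ ≠ (Real.pi / α) * (1 / 2 + (k : ℝ)))
    (θ : ℝ → ℂ) (hθ : ∀ x : ℝ, θ x = (β : ℂ) * ((x : ℂ) + (x₂ : ℂ)) + Complex.I * (α : ℂ) * (x₁ : ℂ))
    (K Kt : ℝ → ℂ)
    (hK : ∀ x : ℝ, K x = 4 * Complex.arctan (Complex.exp (θ x)))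
    (hKt : ∀ x : ℝ, Kt x = 4 * Complex.I * (α : ℂ) * Complex.exp (θ x)
        / (1 + Complex.exp (2 * θ x))) :
    -- (1) trigonometric identities
    (∀ x : ℝ, Complex.sin (K x / 2) = (Complex.cosh (θ x))⁻¹) ∧
    (∀ x : ℝ, Complex.cos (K x / 2) = -Complex.tanh (θ x)) ∧
    -- (2) Bäcklund equations with parameter β − iα
    (∀ x : ℝ, deriv K x
      = (1 / ((β : ℂ) - Complex.I * (α : ℂ)) + ((β : ℂ) - Complex.I * (α : ℂ)))
          * Complex.sin (K x / 2)) ∧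
    (∀ x : ℝ, deriv K x = 2 * (β : ℂ) * Complex.sin (K x / 2)) ∧
    (∀ x : ℝ, Kt x
      = (1 / ((β : ℂ) - Complex.I * (α : ℂ)) - ((β : ℂ) - Complex.I * (α : ℂ)))
          * Complex.sin (K x / 2)) ∧
    (∀ x : ℝ, Kt x = 2 * Complex.I * (α : ℂ) * Complex.sin (K x / 2)) ∧
    -- (3) parity about x = −x₂: even real part, odd imaginary part
    (∀ y : ℝ, (deriv K (-x₂ + y)).re = (deriv K (-x₂ - y)).re
      ∧ (deriv K (-x₂ + y)).im = -(deriv K (-x₂ - y)).im) ∧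
    (∀ y : ℝ, (Complex.I * Kt (-x₂ + y)).re = (Complex.I * Kt (-x₂ - y)).re
      ∧ (Complex.I * Kt (-x₂ + y)).im = -(Complex.I * Kt (-x₂ - y)).im) ∧
    (∀ y : ℝ, (Complex.sin (K (-x₂ + y) / 2)).re = (Complex.sin (K (-x₂ - y) / 2)).re
      ∧ (Complex.sin (K (-x₂ + y) / 2)).im = -(Complex.sin (K (-x₂ - y) / 2)).im) ∧
    (∀ y : ℝ, (Complex.I * Complex.cos (K (-x₂ + y) / 2)).re
        = (Complex.I * Complex.cos (K (-x₂ - y) / 2)).re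
      ∧ (Complex.I * Complex.cos (K (-x₂ + y) / 2)).im
        = -(Complex.I * Complex.cos (K (-x₂ - y) / 2)).im) := by
  have hβ : 0 < 1 - β ^ 2 := by nlinarith [sq_abs β, abs_nonneg β]
  have hα0 : α ≠ 0 := hα ▸ (Real.sqrt_pos.2 hβ).ne'
  have hαβ : β ^ 2 + α ^ 2 = 1 := by rw [hα, Real.sq_sqrt hβ.le]; ring
  have hcos : ∀ x, Real.cos (θ x).im ≠ 0 := fun x => by
    simpa [hθ] using Real.cos_mul_ne_zero_of_forall_ne hα0 hx₁
  have hcosh : ∀ x, cosh (θ x) ≠ 0 := fun x => cosh_ne_zero_of_cos_im_ne_zero (hcos x)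
  have hKhalf : ∀ x, K x / 2 = 2 * arctan (exp (θ x)) := fun x => by rw [hK]; ring
  have hsin : ∀ x, sin (K x / 2) = (cosh (θ x))⁻¹ := fun x => by
    rw [hKhalf, sin_two_mul_arctan_exp (hcosh x)]
  have hcosK : ∀ x, cos (K x / 2) = -tanh (θ x) := fun x => by
    rw [hKhalf, cos_two_mul_arctan_exp (hcosh x)]
  have hK' : ∀ x, deriv K x = 2 * β * sin (K x / 2) := fun x => by
    have hKd : HasDerivAt K (4 * (β / (2 * cosh (θ x)))) x := by
      rw [funext hK, funext hθ]
      exact ((hasDerivAt_ofReal_affine β x₂ _ x).arctan_exp (hθ x ▸ hcos x)).const_mul 4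
    rw [hKd.deriv, hsin]
    field_simp
    ring
  have hKt' : ∀ x, Kt x = 2 * I * α * sin (K x / 2) := fun x => by
    rw [hKt, hsin, ← two_mul_exp_div_one_add_exp_sq, sq, ← exp_add, ← two_mul]
    ring
  have hθ_symm : ∀ y : ℝ, θ (-x₂ - y) = -conj (θ (-x₂ + y)) := fun y => by
    simp only [hθ, map_add, map_mul, conj_I, conj_ofReal]
    push_cast
    ring
  have hsin_symm : ∀ y : ℝ, conj (sin (K (-x₂ + y) / 2)) = sin (K (-x₂ - y) / 2) := fun y => by
    rw [hsin, hsin, hθ_symm, cosh_neg_conj, map_inv₀]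
  have hcos_symm : ∀ y : ℝ, conj (I * cos (K (-x₂ + y) / 2)) = I * cos (K (-x₂ - y) / 2) :=
    fun y => by
      rw [hcosK, hcosK, hθ_symm, tanh_neg_conj, map_mul, map_neg, conj_I]
      ring
  refine ⟨hsin, hcosK, fun x => ?_, hK', fun x => ?_, hKt', fun y => ?_, fun y => ?_,
    fun y => re_eq_and_im_eq_neg_of_conj_eq (hsin_symm y),
    fun y => re_eq_and_im_eq_neg_of_conj_eq (hcos_symm y)⟩
  · rw [hK', one_div_ofReal_sub_I_mul hαβ]; ring
  · rw [hKt', one_div_ofReal_sub_I_mul hαβ]; ring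
  · exact re_eq_and_im_eq_neg_of_conj_eq (by rw [hK', hK', ← hsin_symm]; simp [map_ofNat])
  · exact re_eq_and_im_eq_neg_of_conj_eq (by rw [hKt', hKt', ← hsin_symm]; simp [map_ofNat])

/-- **The complex-valued kink as a Bäcklund transform of zero (Lemma 3.5).**
For `0 < |β| < 1`, `α = √(1−β²)` and shifts `x₁, x₂` with `x₁` nondegenerate,
the complex kink `K(x) = 4 arctan(e^{θ(x)})`, `θ(x) = β(x+x₂)+iαx₁`, with
`Kₜ(x) = 4iα e^{θ}/(1+e^{2θ})`, satisfies `sin(K/2) = sech θ`, `cos(K/2) = −tanh θ`,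
the Bäcklund equations with parameter `β − iα`, and the stated parity properties
about the axis `x = −x₂`. -/
theorem complex_kink_backlund_of_zero (β x₁ x₂ : ℝ) (hβ0 : 0 < |β|) (hβ1 : |β| < 1)
    (α : ℝ) (hα : α = Real.sqrt (1 - β ^ 2))
    (hx₁ : ∀ k : ℤ, x₁ ≠ (Real.pi / α) * (1 / 2 + (k : ℝ)))
    (θ : ℝ → ℂ) (hθ : ∀ x : ℝ, θ x = (β : ℂ) * ((x : ℂ) + (x₂ : ℂ)) + Complex.I * (α : ℂ) * (x₁ : ℂ))
    (K Kt : ℝ → ℂ)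
    (hK : ∀ x : ℝ, K x = 4 * Complex.arctan (Complex.exp (θ x)))
    (hKt : ∀ x : ℝ, Kt x = 4 * Complex.I * (α : ℂ) * Complex.exp (θ x)
        / (1 + Complex.exp (2 * θ x))) :
    -- (1) trigonometric identities
    (∀ x : ℝ, Complex.sin (K x / 2) = (Complex.cosh (θ x))⁻¹) ∧
    (∀ x : ℝ, Complex.cos (K x / 2) = -Complex.tanh (θ x)) ∧
    -- (2) Bäcklund equations with parameter β − iα
    (∀ x : ℝ, deriv K x
      = (1 / ((β : ℂ) - Complex.I * (α : ℂ)) + ((β : ℂ) - Complex.I * (α : ℂ)))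
          * Complex.sin (K x / 2)) ∧
    (∀ x : ℝ, deriv K x = 2 * (β : ℂ) * Complex.sin (K x / 2)) ∧
    (∀ x : ℝ, Kt x
      = (1 / ((β : ℂ) - Complex.I * (α : ℂ)) - ((β : ℂ) - Complex.I * (α : ℂ)))
          * Complex.sin (K x / 2)) ∧
    (∀ x : ℝ, Kt x = 2 * Complex.I * (α : ℂ) * Complex.sin (K x / 2)) ∧
    -- (3) parity about x = −x₂: even real part, odd imaginary part
    (∀ y : ℝ, (deriv K (-x₂ + y)).re = (deriv K (-x₂ - y)).re
      ∧ (deriv K (-x₂ + y)).im = -(deriv K (-x₂ - y)).im) ∧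
    (∀ y : ℝ, (Complex.I * Kt (-x₂ + y)).re = (Complex.I * Kt (-x₂ - y)).re
      ∧ (Complex.I * Kt (-x₂ + y)).im = -(Complex.I * Kt (-x₂ - y)).im) ∧
    (∀ y : ℝ, (Complex.sin (K (-x₂ + y) / 2)).re = (Complex.sin (K (-x₂ - y) / 2)).re
      ∧ (Complex.sin (K (-x₂ + y) / 2)).im = -(Complex.sin (K (-x₂ - y) / 2)).im) ∧
    (∀ y : ℝ, (Complex.I * Complex.cos (K (-x₂ + y) / 2)).re
        = (Complex.I * Complex.cos (K (-x₂ - y) / 2)).re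
      ∧ (Complex.I * Complex.cos (K (-x₂ + y) / 2)).im
        = -(Complex.I * Complex.cos (K (-x₂ - y) / 2)).im) :=
  complex_kink_backlund_of_zero_general β x₁ x₂ hβ1 α hα hx₁ θ hθ K Kt hK hKt
end

section
/- Fix β real with 0 < |β| < 1, γ = (1−β²)^{−1/2}, x₁, x₂ ∈ ℝ. Let A, Aₜ be the kink-antikink profile with parameters (β, x₁, x₂), and let Q̃(x) = 4·arctan(e^{γ(x+x₁+x₂)}) with Q̃ₜ(x) = 2βγ·sech(γ(x+x₁+x₂)) (the real kink profile of speed −β and shift x₁+x₂). Set a = a(β) = √((1+β)/(1−β)). Then: (1) lim_{x→+∞} cos((A(x)+Q̃(x))/2) = −1, lim_{x→−∞} cos((A(x)+Q̃(x))/2) = 1, lim_{x→+∞} cos((A(x)−Q̃(x))/2) = −1, lim_{x→−∞} cos((A(x)−Q̃(x))/2) = 1; (2) for all x ∈ ℝ: A′(x) − Q̃ₜ(x) = (1/a)·sin((A(x)+Q̃(x))/2) + a·sin((A(x)−Q̃(x))/2) and Aₜ(x) − Q̃′(x) = (1/a)·sin((A(x)+Q̃(x))/2) − a·sin((A(x)−Q̃(x))/2);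 i.e. (A, Aₜ) is a Bäcklund transform of (Q̃, Q̃ₜ) with parameter a(β). -/
/-!
Write `t = γ x₁` and `y = γ (x + x₂)`, so that the kink `Q̃` has phase `t + y`. The half-angle
values `sin (2 arctan (exp w)) = sech w` and `cos (2 arctan (exp w)) = -tanh w` turn both
Bäcklund equations into rational identities in `sinh`, `cosh` of `t` and `y`, in which `γ` factors
out once `a = γ (1 + β)` and `1 / a = γ (1 - β)` are substituted; what remains are the addition
formulas `sinh ((t + y) - y) = sinh t` and `cosh ((t + y) - t) = cosh y`. The limits follow
because `A → 0` at both ends (its denominator contains `cosh`), while `Q̃ → 2π` at `+∞`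
and `Q̃ → 0` at `-∞`.
-/

open Filter Topology Real

namespace Real

theorem sin_two_mul_arctan (t : ℝ) : sin (2 * arctan t) = 2 * t / (1 + t ^ 2) := by
  have h : sqrt (1 + t ^ 2) ^ 2 = 1 + t ^ 2 := sq_sqrt (by positivity)
  rw [sin_two_mul, sin_arctan, cos_arctan]
  field_simp
  rw [h]

theorem cos_two_mul_arctan (t : ℝ) : cos (2 * arctan t) = (1 - t ^ 2) / (1 + t ^ 2) := by
  have h : sqrt (1 + t ^ 2) ^ 2 = 1 + t ^ 2 := sq_sqrt (by positivity)
  rw [cos_two_mul, cos_arctan, div_pow, one_pow, h]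
  field_simp
  ring

theorem sin_two_mul_arctan_exp (w : ℝ) : sin (2 * arctan (exp w)) = (cosh w)⁻¹ := by
  rw [sin_two_mul_arctan, cosh_eq, exp_neg]
  field_simp
  ring

theorem cos_two_mul_arctan_exp (w : ℝ) : cos (2 * arctan (exp w)) = -tanh w := by
  rw [cos_two_mul_arctan, tanh_eq, exp_neg]
  field_simp
  ring

end Real

theorem kinkAntikink_backlund_space {β : ℝ} (hβ : β ≠ 0) (γ t y : ℝ) :
    -4 * β * sinh t * sinh y * γ / (β ^ 2 * cosh y ^ 2 + sinh t ^ 2) - 2 * β * γ * (cosh (t + y))⁻¹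
      = γ * (1 - β) * sin (2 * arctan (sinh t / (β * cosh y)) + 2 * arctan (exp (t + y)))
        + γ * (1 + β) * sin (2 * arctan (sinh t / (β * cosh y)) - 2 * arctan (exp (t + y))) := by
  have key : sinh (t + y) * cosh y - cosh (t + y) * sinh y = sinh t := by
    rw [← sinh_sub, add_sub_cancel_right]
  have hN : 0 < β ^ 2 * cosh y ^ 2 + sinh t ^ 2 := by positivity
  have := cosh_pos y
  have := cosh_pos (t + y)
  rw [sin_add, sin_sub, sin_two_mul_arctan_exp, cos_two_mul_arctan_exp, sin_two_mul_arctan,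
    cos_two_mul_arctan, tanh_eq_sinh_div_cosh]
  field_simp
  linear_combination 4 * γ * β * sinh t * key

theorem kinkAntikink_backlund_time {β : ℝ} (hβ : β ≠ 0) (γ t y : ℝ) :
    4 * β ^ 2 * γ * cosh y * cosh t / (β ^ 2 * cosh y ^ 2 + sinh t ^ 2) - 2 * γ * (cosh (t + y))⁻¹
      = γ * (1 - β) * sin (2 * arctan (sinh t / (β * cosh y)) + 2 * arctan (exp (t + y)))
        - γ * (1 + β) * sin (2 * arctan (sinh t / (β * cosh y)) - 2 * arctan (exp (t + y))) := by
  have key : cosh (t + y) * cosh t - sinh (t + y) * sinh t = cosh y := by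
    rw [← cosh_sub, add_sub_cancel_left]
  have hN : 0 < β ^ 2 * cosh y ^ 2 + sinh t ^ 2 := by positivity
  have := cosh_pos y
  have := cosh_pos (t + y)
  rw [sin_add, sin_sub, sin_two_mul_arctan_exp, cos_two_mul_arctan_exp, sin_two_mul_arctan,
    cos_two_mul_arctan, tanh_eq_sinh_div_cosh]
  field_simp
  linear_combination 4 * γ * β ^ 2 * cosh y * key

theorem hasDerivAt_four_mul_arctan_exp {f : ℝ → ℝ} {f' x : ℝ} (hf : HasDerivAt f f' x) :
    HasDerivAt (fun x => 4 * arctan (exp (f x))) (2 * f' * (cosh (f x))⁻¹) x := by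
  refine (hf.exp.arctan.const_mul 4).congr_deriv ?_
  rw [cosh_eq, exp_neg]
  field_simp
  ring

theorem hasDerivAt_four_mul_arctan_div_cosh {f : ℝ → ℝ} {f' x : ℝ} (hf : HasDerivAt f f' x)
    (s : ℝ) {β : ℝ} (hβ : β ≠ 0) :
    HasDerivAt (fun x => 4 * arctan (s / (β * cosh (f x))))
      (-4 * β * s * sinh (f x) * f' / (β ^ 2 * cosh (f x) ^ 2 + s ^ 2)) x := by
  have hc := cosh_pos (f x)
  refine ((((hasDerivAt_const x s).div (hf.cosh.const_mul β) (by positivity)).arctan).const_mul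
    4).congr_deriv ?_
  simp only [Pi.div_apply]
  field_simp
  ring

theorem tendsto_cosh_atTop : Tendsto cosh atTop atTop :=
  tendsto_atTop_mono (fun x => by rw [cosh_eq]; linarith [exp_pos (-x)])
    (tendsto_exp_atTop.atTop_div_const two_pos)

theorem tendsto_cosh_atBot : Tendsto cosh atBot atTop := by
  simpa [Function.comp_def] using tendsto_cosh_atTop.comp tendsto_neg_atBot_atTop

theorem tendsto_four_mul_arctan_div_cosh {l : Filter ℝ} {f : ℝ → ℝ}
    (hf : Tendsto (fun x => cosh (f x)) l atTop) (s β : ℝ) :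
    Tendsto (fun x => 4 * arctan (s / (β * cosh (f x)))) l (𝓝 0) := by
  have h : Tendsto (fun x => s / β * (cosh (f x))⁻¹) l (𝓝 0) := by
    simpa using hf.inv_tendsto_atTop.const_mul (s / β)
  have h' := ((continuous_arctan.tendsto 0).comp h).const_mul 4
  rw [arctan_zero, mul_zero] at h'
  exact h'.congr fun x => by simp only [Function.comp_apply]; ring_nf

theorem tendsto_four_mul_arctan_exp_atTop {l : Filter ℝ} {f : ℝ → ℝ} (hf : Tendsto f l atTop) :
    Tendsto (fun x => 4 * arctan (exp (f x))) l (𝓝 (2 * π)) := by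
  have h := ((tendsto_arctan_atTop.mono_right nhdsWithin_le_nhds).comp
    (tendsto_exp_atTop.comp hf)).const_mul 4
  rwa [show 4 * (π / 2) = 2 * π by ring] at h

theorem tendsto_four_mul_arctan_exp_atBot {l : Filter ℝ} {f : ℝ → ℝ} (hf : Tendsto f l atBot) :
    Tendsto (fun x => 4 * arctan (exp (f x))) l (𝓝 0) := by
  simpa using ((continuous_arctan.tendsto 0).comp (tendsto_exp_atBot.comp hf)).const_mul 4

theorem tendsto_mul_add_atTop {γ : ℝ} (hγ : 0 < γ) (c : ℝ) :
    Tendsto (fun x => γ * (x + c)) atTop atTop :=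
  (tendsto_atTop_add_const_right _ c tendsto_id).const_mul_atTop hγ

theorem tendsto_mul_add_atBot {γ : ℝ} (hγ : 0 < γ) (c : ℝ) :
    Tendsto (fun x => γ * (x + c)) atBot atBot :=
  (tendsto_atBot_add_const_right _ c tendsto_id).const_mul_atBot hγ

theorem sqrt_one_add_div_one_sub {β : ℝ} (hβ : |β| < 1) :
    sqrt ((1 + β) / (1 - β)) = (1 - β ^ 2) ^ (-(1 / 2 : ℝ)) * (1 + β) := by
  obtain ⟨hlo, hhi⟩ := abs_lt.mp hβ
  have hpos : 0 < 1 - β ^ 2 := by nlinarith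
  have hs : sqrt (1 - β ^ 2) ^ 2 = 1 - β ^ 2 := sq_sqrt hpos.le
  have : 0 < sqrt (1 - β ^ 2) := sqrt_pos.mpr hpos
  rw [rpow_neg hpos.le, ← sqrt_eq_rpow, ← div_eq_inv_mul,
    show (1 + β) / (1 - β) = ((1 + β) / sqrt (1 - β ^ 2)) ^ 2 by
      rw [div_pow, hs]; field_simp; ring,
    sqrt_sq (div_nonneg (by linarith) this.le)]

theorem inv_sqrt_one_add_div_one_sub {β : ℝ} (hβ : |β| < 1) :
    (sqrt ((1 + β) / (1 - β)))⁻¹ = (1 - β ^ 2) ^ (-(1 / 2 : ℝ)) * (1 - β) := by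
  have h := sqrt_one_add_div_one_sub (β := -β) (by rwa [abs_neg])
  rw [neg_sq, ← sub_eq_add_neg, sub_neg_eq_add] at h
  rw [← sqrt_inv, inv_div, h]

/-- **The kink-antikink as a Bäcklund transform of a real kink (Proposition 4.6).**
For `0 < |β| < 1`, `γ = (1−β²)^{-1/2}`, the kink-antikink profile `(A, Aₜ)` and the real
kink profile `Q̃` of speed `−β` and shift `x₁+x₂` satisfy `cos((A±Q̃)/2) → −1` at `+∞`
and `→ 1` at `−∞`, and the Bäcklund equations with parameter `a(β) = √((1+β)/(1−β))`. -/
theorem kink_antikink_backlund_of_kink (β x₁ x₂ : ℝ) (hβ0 : 0 < |β|) (hβ1 : |β| < 1)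
    (γ : ℝ) (hγ : γ = (1 - β ^ 2) ^ (-(1 / 2 : ℝ)))
    (A At : ℝ → ℝ)
    (hA : ∀ x : ℝ, A x
      = 4 * Real.arctan (Real.sinh (γ * x₁) / (β * Real.cosh (γ * (x + x₂)))))
    (hAt : ∀ x : ℝ, At x
      = 4 * β ^ 2 * γ * Real.cosh (γ * (x + x₂)) * Real.cosh (γ * x₁)
          / (β ^ 2 * (Real.cosh (γ * (x + x₂))) ^ 2 + (Real.sinh (γ * x₁)) ^ 2))
    (Q Qt : ℝ → ℝ)
    (hQ : ∀ x : ℝ, Q x = 4 * Real.arctan (Real.exp (γ * (x + x₁ + x₂))))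
    (hQt : ∀ x : ℝ, Qt x = 2 * β * γ * (Real.cosh (γ * (x + x₁ + x₂)))⁻¹)
    (a : ℝ) (ha : a = Real.sqrt ((1 + β) / (1 - β))) :
    -- (1) limits at ±∞
    (Tendsto (fun x : ℝ => Real.cos ((A x + Q x) / 2)) atTop (nhds (-1))) ∧
    (Tendsto (fun x : ℝ => Real.cos ((A x + Q x) / 2)) atBot (nhds 1)) ∧
    (Tendsto (fun x : ℝ => Real.cos ((A x - Q x) / 2)) atTop (nhds (-1))) ∧
    (Tendsto (fun x : ℝ => Real.cos ((A x - Q x) / 2)) atBot (nhds 1)) ∧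
    -- (2) Bäcklund equations with parameter a(β)
    (∀ x : ℝ, deriv A x - Qt x
      = (1 / a) * Real.sin ((A x + Q x) / 2) + a * Real.sin ((A x - Q x) / 2)) ∧
    (∀ x : ℝ, At x - deriv Q x
      = (1 / a) * Real.sin ((A x + Q x) / 2) - a * Real.sin ((A x - Q x) / 2)) := by
  have hβ : β ≠ 0 := abs_pos.mp hβ0
  have hγ_pos : 0 < γ := hγ ▸ rpow_pos_of_pos (by nlinarith [abs_lt.mp hβ1]) _
  have ha_eq : a = γ * (1 + β) := by rw [ha, hγ, sqrt_one_add_div_one_sub hβ1]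
  have ha_inv : 1 / a = γ * (1 - β) := by rw [one_div, ha, hγ, inv_sqrt_one_add_div_one_sub hβ1]
  have hphase : ∀ x, γ * (x + x₁ + x₂) = γ * x₁ + γ * (x + x₂) := fun x => by ring
  simp only [hphase] at hQ hQt
  obtain rfl := funext hA
  obtain rfl := funext hQ
  have hA_top := tendsto_four_mul_arctan_div_cosh
    (tendsto_cosh_atTop.comp (tendsto_mul_add_atTop hγ_pos x₂)) (sinh (γ * x₁)) β
  have hA_bot := tendsto_four_mul_arctan_div_cosh
    (tendsto_cosh_atBot.comp (tendsto_mul_add_atBot hγ_pos x₂)) (sinh (γ * x₁)) β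
  have hQ_top := tendsto_four_mul_arctan_exp_atTop
    (tendsto_atTop_add_const_left _ (γ * x₁) (tendsto_mul_add_atTop hγ_pos x₂))
  have hQ_bot := tendsto_four_mul_arctan_exp_atBot
    (tendsto_atBot_add_const_left _ (γ * x₁) (tendsto_mul_add_atBot hγ_pos x₂))
  have hlin (x : ℝ) : HasDerivAt (fun x => γ * (x + x₂)) γ x := by
    simpa using ((hasDerivAt_id x).add_const x₂).const_mul γ
  have half (p q : ℝ) :
      (4 * p + 4 * q) / 2 = 2 * p + 2 * q ∧ (4 * p - 4 * q) / 2 = 2 * p - 2 * q :=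
    ⟨by ring, by ring⟩
  have cos_half {l : Filter ℝ} {f : ℝ → ℝ} {c : ℝ} (hf : Tendsto f l (𝓝 c)) :
      Tendsto (fun x => cos (f x / 2)) l (𝓝 (cos (c / 2))) :=
    (continuous_cos.tendsto _).comp (hf.div_const 2)
  refine ⟨?_, ?_, ?_, ?_, fun x => ?_, fun x => ?_⟩
  · simpa using cos_half (hA_top.add hQ_top)
  · simpa using cos_half (hA_bot.add hQ_bot)
  · simpa [neg_div] using cos_half (hA_top.sub hQ_top)
  · simpa using cos_half (hA_bot.sub hQ_bot)
  · rw [(hasDerivAt_four_mul_arctan_div_cosh (hlin x) _ hβ).deriv, hQt, ha_inv, ha_eq,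
      (half _ _).1, (half _ _).2]
    exact kinkAntikink_backlund_space hβ γ _ _
  · rw [hAt, (hasDerivAt_four_mul_arctan_exp ((hlin x).const_add _)).deriv, ha_inv, ha_eq,
      (half _ _).1, (half _ _).2]
    exact kinkAntikink_backlund_time hβ γ _ _
end
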